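/- arXiv:2305.00765 — 9 statements merged into one kernel-verified Lean document; each statement's English description precedes it below -/
import Mathlib

section
/- For every integer n ≥ 3 and every residue j ∈ {0,1}, the sum of μ(n/d) over divisors d of n with d ≡ j (mod 2) equals 0. -/
/-!
Summing `μ(n/d)` over all divisors gives `(μ * ζ)(n) = [n = 1]`. The even divisors of `n = 2m`
are exactly `2e` with `e ∣ m`, and `n / 2e = m / e`, so their sum is `[m = 1]`; an odd `n` has no
even divisors. Hence the even part vanishes unless `n = 2`, and the odd part, being the
difference, vanishes unless `n ∈ {1, 2}`.
-/

open Finset ArithmeticFunction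

open scoped ArithmeticFunction.Moebius

theorem Nat.sum_divisors_moebius_div_eq_zero {n : ℕ} (hn : n ≠ 1) :
    ∑ d ∈ n.divisors, μ (n / d) = 0 := by
  rw [Nat.sum_div_divisors, ← coe_mul_zeta_apply, moebius_mul_coe_zeta, one_apply_ne hn]

theorem Nat.filter_dvd_divisors_mul {k : ℕ} (hk : k ≠ 0) (m : ℕ) :
    (k * m).divisors.filter (k ∣ ·) = m.divisors.map ⟨(k * ·), mul_right_injective₀ hk⟩ := by
  ext d
  simp only [mem_filter, Nat.mem_divisors, mem_map, Function.Embedding.coeFn_mk]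
  constructor
  · rintro ⟨⟨hdvd, hne⟩, e, rfl⟩
    exact ⟨e, ⟨Nat.dvd_of_mul_dvd_mul_left (Nat.pos_of_ne_zero hk) hdvd,
      right_ne_zero_of_mul hne⟩, rfl⟩
  · rintro ⟨e, ⟨hdvd, hne⟩, rfl⟩
    exact ⟨⟨mul_dvd_mul_left k hdvd, mul_ne_zero hk hne⟩, dvd_mul_right k e⟩

theorem Nat.sum_even_divisors_moebius_div_eq_zero {n : ℕ} (hn : n ≠ 2) :
    ∑ d ∈ n.divisors.filter (fun d => d % 2 = 0), μ (n / d) = 0 := by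
  obtain ⟨m, rfl | rfl⟩ := n.even_or_odd'
  · have hfilter : (2 * m).divisors.filter (fun d => d % 2 = 0) =
        (2 * m).divisors.filter (2 ∣ ·) :=
      filter_congr fun d _ => Nat.dvd_iff_mod_eq_zero.symm
    rw [hfilter, Nat.filter_dvd_divisors_mul two_ne_zero, sum_map]
    simp only [Function.Embedding.coeFn_mk, Nat.mul_div_mul_left _ _ two_pos]
    exact Nat.sum_divisors_moebius_div_eq_zero (by omega)
  · refine sum_eq_zero fun d hd => absurd hd ?_
    simp only [mem_filter, Nat.mem_divisors, not_and]
    rintro ⟨hdvd, -⟩ heven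
    have := (Nat.dvd_of_mod_eq_zero heven).trans hdvd
    omega

theorem Nat.sum_odd_divisors_moebius_div_eq_zero {n : ℕ} (hn₁ : n ≠ 1) (hn₂ : n ≠ 2) :
    ∑ d ∈ n.divisors.filter (fun d => d % 2 = 1), μ (n / d) = 0 := by
  have hsplit := sum_filter_add_sum_filter_not n.divisors (fun d => d % 2 = 0) (fun d => μ (n / d))
  simp only [Nat.mod_two_ne_zero, Nat.sum_even_divisors_moebius_div_eq_zero hn₂,
    Nat.sum_divisors_moebius_div_eq_zero hn₁, zero_add] at hsplit
  exact hsplit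

/-- For `n ≥ 3` and `j ∈ {0,1}`, the sum of `μ(n/d)` over divisors `d` of `n`
with `d ≡ j (mod 2)` vanishes. -/
theorem moebius_sum_parity (n j : ℕ) (hn : 3 ≤ n) (hj : j = 0 ∨ j = 1) :
    ∑ d ∈ n.divisors.filter (fun d => d % 2 = j), ArithmeticFunction.moebius (n / d) = 0 := by
  rcases hj with rfl | rfl
  · exact Nat.sum_even_divisors_moebius_div_eq_zero (by omega)
  · exact Nat.sum_odd_divisors_moebius_div_eq_zero (by omega) (by omega)
end

section
/- The formal power series identity log((sinh(t/2))/(t/2)) = Σ_{n≥2} (B_n / n) · t^n / n! holds, where B_n are the Bernoulli numbers. -/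
/-! Both sides have constant term `0`, so it suffices to show that their derivatives agree after
multiplication by `S = sinh(t/2)/(t/2)`. For the formal logarithm, `S · (log S)' = S'` follows from
the telescoping identity `(1 + g) L_N' = (1 - (-g)^N) g'` for the partial sums `L_N` of
`log (1 + g)`, since `(-g)^N` vanishes to order `N`. For the right-hand side `R`, writing
`E± = e^{±t/2}` we have `t S = E₊ - E₋`, `t R' = B(t) - 1 + t/2` with `B(t) = t/(e^t - 1)`, and
`B(t) (E₊ - E₋) = t E₋` because `(E₊ - E₋) E₊ = e^t - 1`; together these give
`t² (S R' - S') = 0`. -/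

open Finset

/-- The formal logarithm `log f = ∑_{k ≥ 1} (−1)^{k+1} (f−1)^k / k` of a power
series `f` with constant term `1`, defined coefficientwise. -/
noncomputable def logS (f : PowerSeries ℚ) : PowerSeries ℚ :=
  PowerSeries.mk fun n =>
    ∑ k ∈ Finset.range (n + 1), (-1) ^ (k + 1) * (PowerSeries.coeff (R := ℚ) n ((f - 1) ^ k)) / k

namespace PowerSeries

section Rescale

variable {R : Type*} [CommRing R]

theorem derivative_rescale (f : R⟦X⟧) (a : R) :
    d⁄dX R (rescale a f) = C a * rescale a (d⁄dX R f) := by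
  ext n
  simp only [coeff_derivative, coeff_rescale, coeff_C_mul]
  ring

theorem derivative_rescale_exp [Algebra ℚ R] (a : R) :
    d⁄dX R (rescale a (exp R)) = C a * rescale a (exp R) := by
  rw [derivative_rescale, derivative_exp]

end Rescale

theorem X_pow_dvd_pow_of_constantCoeff_eq_zero {R : Type*} [CommSemiring R] {g : R⟦X⟧}
    (hg : constantCoeff g = 0) (k : ℕ) : X ^ k ∣ g ^ k :=
  pow_dvd_pow_of_dvd (X_dvd_iff.mpr hg) k

theorem rescale_exp_mul_rescale_neg_exp {A : Type*} [CommRing A] [Algebra ℚ A] (a : A) :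
    rescale a (exp A) * rescale (-a) (exp A) = 1 := by
  rw [exp_mul_exp_eq_exp_add, add_neg_cancel, rescale_zero_apply, constantCoeff_exp, map_one]

theorem rescale_half_exp_sq (K : Type*) [Field K] [CharZero K] :
    rescale (1 / 2 : K) (exp K) ^ 2 = exp K := by
  rw [sq, exp_mul_exp_eq_exp_add]
  norm_num [rescale_one]

end PowerSeries

section

open PowerSeries

noncomputable def logPartialSum (g : ℚ⟦X⟧) (N : ℕ) : ℚ⟦X⟧ :=
  ∑ k ∈ range (N + 1), C ((-1 : ℚ) ^ (k + 1) / k) * g ^ k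

theorem coeff_logS_eq_coeff_logPartialSum {f : ℚ⟦X⟧} (hf : constantCoeff f = 1) {n N : ℕ}
    (hnN : n ≤ N) : coeff n (logS f) = coeff n (logPartialSum (f - 1) N) := by
  have hg : constantCoeff (f - 1) = 0 := by simp [hf]
  rw [logS, coeff_mk, logPartialSum, map_sum]
  refine sum_subset (range_subset_range.mpr (by omega)) (fun k _ hk => ?_) |>.trans
    (sum_congr rfl fun k _ => by rw [coeff_C_mul]; ring)
  have hnk : n < k := by simp only [mem_range] at hk; omega
  rw [X_pow_dvd_iff.mp (X_pow_dvd_pow_of_constantCoeff_eq_zero hg k) n hnk]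
  ring

theorem one_add_mul_derivative_logPartialSum (g : ℚ⟦X⟧) (N : ℕ) :
    (1 + g) * d⁄dX ℚ (logPartialSum g N) = (1 - (-g) ^ N) * d⁄dX ℚ g := by
  induction N with
  | zero => simp [logPartialSum]
  | succ N ih =>
    have hterm : d⁄dX ℚ (C ((-1) ^ (N + 1 + 1) / ((N + 1 : ℕ) : ℚ)) * g ^ (N + 1)) =
        (-g) ^ N * d⁄dX ℚ g := by
      have hc : (-1 : ℚ) ^ (N + 1 + 1) / ((N + 1 : ℕ) : ℚ) * ((N + 1 : ℕ) : ℚ) = (-1) ^ N := by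
        field_simp; ring
      rw [Derivation.leibniz, derivative_C, smul_zero, add_zero, smul_eq_mul, derivative_pow,
        ← map_natCast (C (R := ℚ)), Nat.add_sub_cancel, neg_pow g, ← mul_assoc, ← mul_assoc,
        ← map_mul, hc, map_pow, map_neg, map_one]
    rw [logPartialSum, sum_range_succ, map_add, ← logPartialSum, hterm, mul_add, ih]
    ring

theorem mul_derivative_logS {f : ℚ⟦X⟧} (hf : constantCoeff f = 1) :
    f * d⁄dX ℚ (logS f) = d⁄dX ℚ f := by
  have hg : constantCoeff (f - 1) = 0 := by simp [hf]
  ext n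
  have htrunc : coeff n (f * d⁄dX ℚ (logS f)) =
      coeff n (f * d⁄dX ℚ (logPartialSum (f - 1) (n + 1))) := by
    simp only [coeff_mul, coeff_derivative]
    refine sum_congr rfl fun p hp => ?_
    rw [HasAntidiagonal.mem_antidiagonal] at hp
    rw [coeff_logS_eq_coeff_logPartialSum (N := n + 1) hf (by omega)]
  have herror : coeff n ((-(f - 1)) ^ (n + 1) * d⁄dX ℚ f) = 0 := by
    refine X_pow_dvd_iff.mp (Dvd.dvd.mul_right ?_ _) n n.lt_succ_self
    exact X_pow_dvd_pow_of_constantCoeff_eq_zero (by rw [map_neg, hg, neg_zero]) _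
  have hsub : d⁄dX ℚ (f - 1) = d⁄dX ℚ f := by simp
  rw [htrunc, ← add_sub_cancel 1 f, add_sub_cancel_left, one_add_mul_derivative_logPartialSum,
    hsub, sub_mul, one_mul, map_sub, herror, sub_zero, add_sub_cancel]

theorem constantCoeff_logS (f : ℚ⟦X⟧) : constantCoeff (logS f) = 0 := by
  rw [← coeff_zero_eq_constantCoeff_apply, logS, coeff_mk]
  simp

theorem logS_eq_of_mul_derivative_eq {f h : ℚ⟦X⟧} (hf : constantCoeff f = 1)
    (hh : constantCoeff h = 0) (hder : f * d⁄dX ℚ h = d⁄dX ℚ f) : logS f = h := by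
  have hf0 : f ≠ 0 := fun h0 => by simp [h0] at hf
  refine derivative.ext ?_ (by rw [constantCoeff_logS, hh])
  exact mul_left_cancel₀ hf0 ((mul_derivative_logS hf).trans hder.symm)

noncomputable def sinhHalfOverHalf : ℚ⟦X⟧ :=
  mk fun n => if n % 2 = 0 then (1 : ℚ) / (2 ^ n * (n + 1).factorial) else 0

noncomputable def bernoulliDivSeries : ℚ⟦X⟧ :=
  mk fun n => if 2 ≤ n then bernoulli n / n / n.factorial else 0

theorem constantCoeff_sinhHalfOverHalf : constantCoeff sinhHalfOverHalf = 1 := by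
  simp [sinhHalfOverHalf, ← coeff_zero_eq_constantCoeff_apply]

theorem constantCoeff_bernoulliDivSeries : constantCoeff bernoulliDivSeries = 0 := by
  simp [bernoulliDivSeries, ← coeff_zero_eq_constantCoeff_apply]

theorem X_mul_sinhHalfOverHalf :
    X * sinhHalfOverHalf = rescale (1 / 2 : ℚ) (exp ℚ) - rescale (-(1 / 2) : ℚ) (exp ℚ) := by
  ext n
  rw [map_sub, coeff_rescale, coeff_rescale, coeff_exp]
  cases n with
  | zero => simp
  | succ m =>
    rw [coeff_succ_X_mul, sinhHalfOverHalf, coeff_mk]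
    rcases Nat.even_or_odd m with hm | hm
    · rw [if_pos (Nat.even_iff.mp hm), hm.add_one.neg_pow, Nat.factorial_succ]
      push_cast
      rw [one_div_pow, pow_succ]
      field_simp
      norm_num
    · rw [if_neg (Nat.not_even_iff_odd.mpr hm ∘ Nat.even_iff.mpr), hm.add_one.neg_pow]
      ring

theorem X_mul_derivative_bernoulliDivSeries :
    X * d⁄dX ℚ bernoulliDivSeries = bernoulliPowerSeries ℚ - 1 + C (1 / 2) * X := by
  ext n
  rw [map_add, map_sub, coeff_C_mul, bernoulliPowerSeries, coeff_mk, Algebra.algebraMap_self,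
    RingHom.id_apply, coeff_one, coeff_X]
  rcases n with _ | _ | n
  · simp
  · norm_num [coeff_derivative, bernoulliDivSeries, bernoulli_one]
  · rw [coeff_succ_X_mul, coeff_derivative, bernoulliDivSeries, coeff_mk, if_pos (by omega),
      if_neg (by omega), if_neg (by omega), Nat.factorial_succ]
    push_cast
    field_simp
    ring

theorem bernoulliPowerSeries_mul_rescale_half_exp_sub :
    bernoulliPowerSeries ℚ * (rescale (1 / 2 : ℚ) (exp ℚ) - rescale (-(1 / 2) : ℚ) (exp ℚ)) =
      X * rescale (-(1 / 2) : ℚ) (exp ℚ) := by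
  set E := rescale (1 / 2 : ℚ) (exp ℚ)
  have hE : E * rescale (-(1 / 2) : ℚ) (exp ℚ) = 1 := rescale_exp_mul_rescale_neg_exp _
  have hsq : E ^ 2 = exp ℚ := rescale_half_exp_sq ℚ
  have hE0 : E ≠ 0 := left_ne_zero_of_mul_eq_one hE
  refine mul_right_cancel₀ hE0 ?_
  linear_combination bernoulliPowerSeries_mul_exp_sub_one ℚ -
    (bernoulliPowerSeries ℚ + X) * hE + bernoulliPowerSeries ℚ * hsq

theorem sinhHalfOverHalf_mul_derivative_bernoulliDivSeries :
    sinhHalfOverHalf * d⁄dX ℚ bernoulliDivSeries = d⁄dX ℚ sinhHalfOverHalf := by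
  have hX2 : (X : ℚ⟦X⟧) ^ 2 ≠ 0 := pow_ne_zero 2 X_ne_zero
  have hXS := X_mul_sinhHalfOverHalf
  have hderiv := congrArg (d⁄dX ℚ) hXS
  rw [Derivation.leibniz, map_sub, derivative_rescale_exp, derivative_rescale_exp, derivative_X,
    smul_eq_mul, smul_eq_mul, mul_one, map_neg] at hderiv
  have hC : (2 : ℚ⟦X⟧) * C (1 / 2) = 1 := by
    rw [← map_ofNat C 2, ← map_mul]
    norm_num
  refine mul_left_cancel₀ hX2 ?_
  linear_combination (X * d⁄dX ℚ bernoulliDivSeries + 1) * hXS +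
    (rescale (1 / 2 : ℚ) (exp ℚ) - rescale (-(1 / 2) : ℚ) (exp ℚ)) *
      X_mul_derivative_bernoulliDivSeries +
    bernoulliPowerSeries_mul_rescale_half_exp_sub - X * hderiv -
    X * rescale (-(1 / 2) : ℚ) (exp ℚ) * hC

end

/-- `log(sinh(t/2)/(t/2)) = ∑_{n ≥ 2} (B_n/n) t^n/n!` as formal power series,
where `sinh(t/2)/(t/2) = ∑_{m ≥ 0} (t/2)^{2m}/(2m+1)!` and `B_n` are the
Bernoulli numbers (with `B_1 = −1/2`). -/
theorem log_sinh_eq_bernoulli :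
    logS (PowerSeries.mk fun n => if n % 2 = 0 then (1 : ℚ) / (2 ^ n * (n + 1).factorial) else 0) =
      PowerSeries.mk fun n => if 2 ≤ n then bernoulli n / n / n.factorial else 0 := by
  exact logS_eq_of_mul_derivative_eq constantCoeff_sinhHalfOverHalf
    constantCoeff_bernoulliDivSeries sinhHalfOverHalf_mul_derivative_bernoulliDivSeries
end

section
/- For every integer n ≥ 1, define V_n(x) = ∏_{1 ≤ k < n/2} (x^2 + 4 sin^2(πk/n)) (with V_1 = V_2 = 1). Then V_n(x) has integer coefficients. -/
open Finset Polynomial Real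

/-- `V_n(x) = ∏_{1 ≤ k < n/2} (x^2 + 4 sin²(πk/n))`, with `V_1 = V_2 = 1`. -/
noncomputable def V (n : ℕ) : Polynomial ℝ :=
  ∏ k ∈ (Finset.Ico 1 n).filter (fun k => 2 * k < n),
    (Polynomial.X ^ 2 + Polynomial.C (4 * Real.sin (Real.pi * k / n) ^ 2))

/-- `W_n(x) = ∏_{1 ≤ k < n/2, gcd(k,n)=1} (x^2 + 4 sin²(πk/n))`, with `W_1 = W_2 = 1`. -/
noncomputable def W (n : ℕ) : Polynomial ℝ :=
  ∏ k ∈ (Finset.Ico 1 n).filter (fun k => 2 * k < n ∧ Nat.gcd k n = 1),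
    (Polynomial.X ^ 2 + Polynomial.C (4 * Real.sin (Real.pi * k / n) ^ 2))

/-!
Since `4 sin² θ = 2 - 2 cos 2θ`, `V n` is `cosProd n = ∏_{1 ≤ k ≤ m} (X - 2 cos (2πk/n))`,
`m = ⌊(n - 1)/2⌋`, evaluated at `X² + 2`. Substituting `y = w + w⁻¹` and writing
`ζ = exp (2πi/n)`, each factor of `w^m · cosProd n (w + w⁻¹)` becomes `(w - ζ^k)(w - ζ^(n-k))`,
so together they run over all `n`-th roots of unity except `1` (and `-1` when `n` is even):
`w^m · cosProd n (w + w⁻¹)` is `(w^n - 1)/(w - 1)` or `(w^n - 1)/(w² - 1)`. The Vieta–Fibonacci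
polynomials satisfy `(w - w⁻¹) S_{j-1}(w + w⁻¹) = w^j - w^(-j)`, which identifies
`cosProd (2m+2) = S_m` and `cosProd (2m+1) = S_m + S_{m-1}`, polynomials with integer
coefficients.
-/

namespace Polynomial.Chebyshev

theorem sub_mul_S_sub_one_eval_add {R : Type*} [CommRing R] {x y : R} (hxy : x * y = 1)
    (n : ℕ) : (x - y) * (S R (n - 1)).eval (x + y) = x ^ n - y ^ n := by
  induction n using Nat.twoStepInduction with
  | zero => simp
  | one => simp
  | more n ih₀ ih₁ =>
    have hS : S R ((n + 2 : ℕ) - 1) = X * S R ((n + 1 : ℕ) - 1) - S R (n - 1) := by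
      rw [S_eq]; push_cast; ring_nf
    rw [hS, eval_sub, eval_mul, eval_X]
    linear_combination (x + y) * ih₁ - ih₀ + (x ^ n - y ^ n) * hxy

end Polynomial.Chebyshev

theorem Polynomial.eq_of_eval_add_inv_eq {K : Type*} [Field K] [IsAlgClosed K] {p q : K[X]}
    (h : ∀ w : K, w ≠ 0 → w ^ 2 ≠ 1 → p.eval (w + w⁻¹) = q.eval (w + w⁻¹)) : p = q := by
  refine eq_of_infinite_eval_eq p q <|
    (Set.toFinite ({2, -2} : Set K)).infinite_compl.mono fun y hy ↦ ?_
  obtain ⟨w, hw⟩ := IsAlgClosed.exists_root (X ^ 2 - C y * X + 1)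
    (ne_of_eq_of_ne (by compute_degree!) two_ne_zero)
  simp only [IsRoot, eval_add, eval_sub, eval_mul, eval_pow, eval_X, eval_C, eval_one] at hw
  have hw0 : w ≠ 0 := by rintro rfl; simp at hw
  obtain rfl : y = w + w⁻¹ := by field_simp; linear_combination -hw
  refine h w hw0 fun hw1 ↦ hy ?_
  rw [sq] at hw1
  rcases mul_self_eq_one_iff.mp hw1 with rfl | rfl <;> norm_num

theorem Finset.prod_range_eq_mul_prod_Ico_mul_prod_Icc {M : Type*} [CommMonoid M] (f : ℕ → M)
    {m n : ℕ} (h : 2 * m < n) :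
    ∏ j ∈ range n, f j =
      f 0 * (∏ j ∈ Ico (m + 1) (n - m), f j) * ∏ k ∈ Icc 1 m, f k * f (n - k) := by
  rw [prod_mul_distrib, ← Ico_add_one_right_eq_Icc, prod_Ico_reflect f 1 (by omega),
    ← Nat.Ico_zero_eq_range, ← prod_Ico_consecutive f (m := 0) (n := 1) (by omega) (by omega),
    ← prod_Ico_consecutive f (m := 1) (n := m + 1) (by omega) (by omega),
    ← prod_Ico_consecutive f (m := m + 1) (n := n - m) (by omega) (by omega),
    show n + 1 - (m + 1) = n - m by omega, Nat.add_sub_cancel, Nat.Ico_succ_singleton,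
    prod_singleton]
  simp only [mul_left_comm, mul_comm]

theorem IsPrimitiveRoot.prod_range_sub_pow {R : Type*} [CommRing R] [IsDomain R] {ζ : R} {n : ℕ}
    (hζ : IsPrimitiveRoot ζ n) (hn : 0 < n) (w : R) :
    ∏ j ∈ range n, (w - ζ ^ j) = w ^ n - 1 := by
  simpa [eval_prod] using congr_arg (eval w) (X_pow_sub_C_eq_prod hζ hn (one_pow n)).symm

theorem Complex.two_mul_cos_two_pi_mul_div {n k : ℕ} (hk : k ≤ n) :
    2 * Complex.cos (2 * π * k / n) =
      Complex.exp (2 * π * Complex.I / n) ^ k + Complex.exp (2 * π * Complex.I / n) ^ (n - k) := by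
  rcases eq_or_ne n 0 with rfl | hn
  · obtain rfl : k = 0 := by omega
    norm_num
  rw [pow_sub₀ _ (Complex.exp_ne_zero _) hk, (Complex.isPrimitiveRoot_exp n hn).pow_eq_one,
    one_mul, ← Complex.exp_nat_mul, ← Complex.exp_neg, Complex.two_cos]
  congr 2 <;> field_simp

theorem mul_add_inv_sub_add_eq {K : Type*} [Field K] {w a b : K} (hw : w ≠ 0) (hab : a * b = 1) :
    w * (w + w⁻¹ - (a + b)) = (w - a) * (w - b) := by
  linear_combination mul_inv_cancel₀ hw - hab

theorem filter_two_mul_lt_eq_Icc (n : ℕ) :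
    (Ico 1 n).filter (fun k => 2 * k < n) = Icc 1 ((n - 1) / 2) := by
  ext k; simp only [mem_filter, mem_Ico, mem_Icc]; omega

noncomputable def cosProd (n : ℕ) : ℝ[X] :=
  ∏ k ∈ Icc 1 ((n - 1) / 2), (X - C (2 * cos (2 * π * k / n)))

theorem V_eq_cosProd_comp (n : ℕ) : V n = (cosProd n).comp (X ^ 2 + 2) := by
  rw [V, cosProd, filter_two_mul_lt_eq_Icc, Polynomial.prod_comp]
  refine prod_congr rfl fun k _ ↦ ?_
  have hcos : cos (2 * π * k / n) = 1 - 2 * sin (π * k / n) ^ 2 := by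
    rw [show 2 * π * k / n = 2 * (π * k / n) by ring, cos_two_mul, cos_sq']; ring
  rw [hcos, sub_comp, X_comp, C_comp]
  simp only [map_mul, map_sub, map_pow, map_one, map_ofNat]
  ring

theorem pow_mul_eval_map_cosProd (n : ℕ) {w : ℂ} (hw : w ≠ 0) :
    w ^ ((n - 1) / 2) * ((cosProd n).map Complex.ofRealHom).eval (w + w⁻¹) =
      ∏ k ∈ Icc 1 ((n - 1) / 2), (w - Complex.exp (2 * π * Complex.I / n) ^ k) *
        (w - Complex.exp (2 * π * Complex.I / n) ^ (n - k)) := by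
  have hpow : w ^ ((n - 1) / 2) = ∏ _k ∈ Icc 1 ((n - 1) / 2), w := by simp
  rw [cosProd, Polynomial.map_prod, eval_prod, hpow, ← prod_mul_distrib]
  refine prod_congr rfl fun k hk ↦ ?_
  have hkn : k ≤ n := by simp only [mem_Icc] at hk; omega
  have hn : n ≠ 0 := by simp only [mem_Icc] at hk; omega
  simp only [Polynomial.map_sub, map_X, map_C, eval_sub, eval_X, eval_C, Complex.ofRealHom_eq_coe]
  push_cast
  rw [Complex.two_mul_cos_two_pi_mul_div hkn]
  refine mul_add_inv_sub_add_eq hw ?_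
  rw [← pow_add, Nat.add_sub_cancel' hkn, (Complex.isPrimitiveRoot_exp n hn).pow_eq_one]

theorem sub_one_mul_pow_mul_eval_map_cosProd_odd (m : ℕ) {w : ℂ} (hw : w ≠ 0) :
    (w - 1) * (w ^ m * ((cosProd (2 * m + 1)).map Complex.ofRealHom).eval (w + w⁻¹)) =
      w ^ (2 * m + 1) - 1 := by
  have hζ := Complex.isPrimitiveRoot_exp (2 * m + 1) (by omega)
  have hprod := pow_mul_eval_map_cosProd (2 * m + 1) hw
  rw [show (2 * m + 1 - 1) / 2 = m by omega] at hprod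
  rw [hprod, ← hζ.prod_range_sub_pow (by omega),
    prod_range_eq_mul_prod_Ico_mul_prod_Icc _ (m := m) (by omega),
    show 2 * m + 1 - m = m + 1 by omega, Ico_self, prod_empty]
  push_cast
  ring

theorem sq_sub_one_mul_pow_mul_eval_map_cosProd_even (m : ℕ) {w : ℂ} (hw : w ≠ 0) :
    (w ^ 2 - 1) * (w ^ m * ((cosProd (2 * m + 2)).map Complex.ofRealHom).eval (w + w⁻¹)) =
      w ^ (2 * m + 2) - 1 := by
  have hζ := Complex.isPrimitiveRoot_exp (2 * m + 2) (by omega)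
  have hhalf := (hζ.pow (by omega) (show 2 * m + 2 = (m + 1) * 2 by ring)).eq_neg_one_of_two_right
  have hprod := pow_mul_eval_map_cosProd (2 * m + 2) hw
  rw [show (2 * m + 2 - 1) / 2 = m by omega] at hprod
  rw [hprod, ← hζ.prod_range_sub_pow (by omega),
    prod_range_eq_mul_prod_Ico_mul_prod_Icc _ (m := m) (by omega),
    show 2 * m + 2 - m = m + 1 + 1 by omega, Nat.Ico_succ_singleton, prod_singleton]
  push_cast at hhalf ⊢
  rw [hhalf]
  ring

theorem cosProd_odd (m : ℕ) :
    cosProd (2 * m + 1) = Chebyshev.S ℝ m + Chebyshev.S ℝ (m - 1) := by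
  refine map_injective Complex.ofRealHom Complex.ofReal_injective
    (eq_of_eval_add_inv_eq fun w hw hw₂ ↦ ?_)
  have hP := sub_one_mul_pow_mul_eval_map_cosProd_odd m hw
  have hinv := mul_inv_cancel₀ hw
  have hS₁ := Chebyshev.sub_mul_S_sub_one_eval_add hinv (m + 1)
  have hS₀ := Chebyshev.sub_mul_S_sub_one_eval_add hinv m
  generalize w⁻¹ = u at *
  have hpow : (w * u) ^ m = 1 := by rw [hinv, one_pow]
  push_cast at hS₁
  simp only [add_sub_cancel_right] at hS₁
  rw [Polynomial.map_add, Chebyshev.map_S, Chebyshev.map_S, eval_add]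
  refine mul_left_cancel₀ (mul_ne_zero (pow_ne_zero m hw) (sub_ne_zero.2 hw₂)) ?_
  linear_combination (w + 1) * hP - w ^ (m + 1) * (hS₁ + hS₀) + (w * u + w) * hpow +
    (1 - w ^ m * ((Chebyshev.S ℂ m).eval (w + u) + (Chebyshev.S ℂ (m - 1)).eval (w + u))) * hinv

theorem cosProd_even (m : ℕ) : cosProd (2 * m + 2) = Chebyshev.S ℝ m := by
  refine map_injective Complex.ofRealHom Complex.ofReal_injective
    (eq_of_eval_add_inv_eq fun w hw hw₂ ↦ ?_)
  have hP := sq_sub_one_mul_pow_mul_eval_map_cosProd_even m hw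
  have hinv := mul_inv_cancel₀ hw
  have hS := Chebyshev.sub_mul_S_sub_one_eval_add hinv (m + 1)
  generalize w⁻¹ = u at *
  have hpow : (w * u) ^ m = 1 := by rw [hinv, one_pow]
  push_cast at hS
  simp only [add_sub_cancel_right] at hS
  rw [Chebyshev.map_S]
  refine mul_left_cancel₀ (mul_ne_zero (pow_ne_zero m hw) (sub_ne_zero.2 hw₂)) ?_
  linear_combination hP - w ^ (m + 1) * hS + w * u * hpow +
    (1 - w ^ m * (Chebyshev.S ℂ m).eval (w + u)) * hinv

theorem exists_map_eq_cosProd (n : ℕ) : ∃ q : ℤ[X], q.map (Int.castRingHom ℝ) = cosProd n := by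
  obtain ⟨m, rfl | rfl⟩ := n.even_or_odd'
  · rcases m with _ | m
    · exact ⟨1, by simp [cosProd]⟩
    · refine ⟨Chebyshev.S ℤ m, ?_⟩
      rw [Chebyshev.map_S, show 2 * (m + 1) = 2 * m + 2 by ring, cosProd_even]
  · refine ⟨Chebyshev.S ℤ m + Chebyshev.S ℤ (m - 1), ?_⟩
    rw [Polynomial.map_add, Chebyshev.map_S, Chebyshev.map_S, cosProd_odd]

theorem V_int_coeffs_general (n : ℕ) :
    ∃ p : Polynomial ℤ, p.map (Int.castRingHom ℝ) = V n := by
  obtain ⟨q, hq⟩ := exists_map_eq_cosProd n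
  refine ⟨q.comp (X ^ 2 + 2), ?_⟩
  rw [map_comp, hq, V_eq_cosProd_comp]
  simp

/-- For every `n ≥ 1`, the polynomial `V_n` has integer coefficients. -/
theorem V_int_coeffs (n : ℕ) (hn : 1 ≤ n) :
    ∃ p : Polynomial ℤ, p.map (Int.castRingHom ℝ) = V n :=
  V_int_coeffs_general n
end

section
/- For an odd integer n ≥ 1, V_n(x) = Σ_{m=0}^{(n−1)/2} [n(n−m−1)!/(m!(n−2m)!)] x^{n−2m−1}, and for an even integer n ≥ 2, V_n(x) = Σ_{m=0}^{n/2−1} C(n−m−1, m) x^{n−2m−2}. -/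
/-!
Put `x = 2 sinh t`. Since `U_{n-1}` has the roots `cos (π k / n)`, `0 < k < n`,
`sinh (n t) = sinh t · ∏_{0 < k < n} (2 cosh t - 2 cos (π k / n))`; pairing `k` with `n - k` turns
the factors into `x² + 4 sin² (π k / n)`, leaving the factor `2 cosh t` from `k = n / 2` when `n`
is even. The Fibonacci polynomials satisfy `F_n (u + v) (u - v) = u ^ n - v ^ n` whenever
`u v = -1`; with `u = eᵗ` and `v = -e⁻ᵗ` this reads `F_n (x) cosh t = sinh (n t)` for even `n`.
Hence `x V_n = F_n` for even `n` and `x V_n = F_{n+1} + F_{n-1}` (the Lucas polynomial) for odd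
`n`, and the explicit formulas are the binomial expansions of these polynomials.
-/

open Finset Polynomial Real

namespace Polynomial

variable (R : Type*) [CommRing R]

noncomputable def fibPoly : ℕ → R[X]
  | 0 => 0
  | 1 => 1
  | n + 2 => X * fibPoly (n + 1) + fibPoly n

variable {R}

@[simp] theorem fibPoly_zero : fibPoly R 0 = 0 := rfl

@[simp] theorem fibPoly_one : fibPoly R 1 = 1 := rfl

theorem fibPoly_add_two (n : ℕ) : fibPoly R (n + 2) = X * fibPoly R (n + 1) + fibPoly R n := rfl

theorem fibPoly_eval_add_mul_sub {u v : R} (huv : u * v = -1) (n : ℕ) :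
    (fibPoly R n).eval (u + v) * (u - v) = u ^ n - v ^ n := by
  induction n using Nat.twoStepInduction with
  | zero => simp
  | one => simp
  | more n ih₀ ih₁ =>
    simp only [fibPoly_add_two, eval_add, eval_mul, eval_X]
    linear_combination (u + v) * ih₁ + ih₀ + (u ^ n - v ^ n) * huv

-- The truncated subtraction is harmless: the coefficient vanishes when `i < j + 1`.
theorem X_mul_C_choose_succ_mul_X_pow (i j : ℕ) :
    X * (C (i.choose (j + 1) : R) * X ^ (i - (j + 1))) = C (i.choose (j + 1) : R) * X ^ (i - j) := by
  rcases lt_or_ge i (j + 1) with h | h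
  · simp [Nat.choose_eq_zero_of_lt h]
  · rw [mul_left_comm, ← pow_succ', show i - (j + 1) + 1 = i - j by omega]

theorem fibPoly_succ_eq_sum_antidiagonal (n : ℕ) :
    fibPoly R (n + 1) = ∑ p ∈ antidiagonal n, C (p.1.choose p.2 : R) * X ^ (p.1 - p.2) := by
  induction n using Nat.twoStepInduction with
  | zero => simp
  | one => simp [fibPoly_add_two, Nat.antidiagonal_succ]
  | more n ih₀ ih₁ =>
    rw [fibPoly_add_two, ih₀, ih₁, Nat.antidiagonal_succ_succ', Nat.antidiagonal_succ']
    simp only [sum_cons, sum_map, Function.Embedding.coe_prodMap, Function.Embedding.coeFn_mk,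
      Function.Embedding.refl_apply, Prod.map_fst, Prod.map_snd, Nat.succ_eq_add_one,
      Nat.choose_succ_succ, Nat.add_sub_add_right, Nat.cast_add, C_add, add_mul, sum_add_distrib,
      mul_add, mul_sum, X_mul_C_choose_succ_mul_X_pow, Nat.choose_zero_right,
      Nat.choose_eq_zero_of_lt (Nat.zero_lt_succ _ : 0 < n + 2)]
    simp only [Nat.cast_one, C_1, one_mul, Nat.sub_zero, Nat.cast_zero, C_0, zero_mul, zero_add,
      ← pow_succ']
    abel

theorem fibPoly_succ_eq_sum_range_succ (n : ℕ) :
    fibPoly R (n + 1) = ∑ m ∈ range (n + 1), C ((n - m).choose m : R) * X ^ (n - 2 * m) := by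
  rw [fibPoly_succ_eq_sum_antidiagonal, ← Nat.sum_antidiagonal_swap,
    Nat.sum_antidiagonal_eq_sum_range_succ_mk]
  refine sum_congr rfl fun m _ => ?_
  rw [Prod.swap_prod_mk, Nat.sub_sub, two_mul]

theorem fibPoly_succ_eq_sum_range {n K : ℕ} (hK : n < 2 * K) :
    fibPoly R (n + 1) = ∑ m ∈ range K, C ((n - m).choose m : R) * X ^ (n - 2 * m) := by
  have hvanish : ∀ N, n < 2 * N → ∀ m ≥ N, C ((n - m).choose m : R) * X ^ (n - 2 * m) = 0 :=
    fun N hN m hm => by rw [Nat.choose_eq_zero_of_lt (by omega), Nat.cast_zero, C_0, zero_mul]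
  rw [fibPoly_succ_eq_sum_range_succ]
  rcases le_total K (n + 1) with h | h
  · exact eventually_constant_sum (hvanish K hK) h
  · exact (eventually_constant_sum (hvanish (n + 1) (by omega)) h).symm

theorem X_mul_sum_choose_of_even {n : ℕ} (hn : n ≠ 0) (he : Even n) :
    X * ∑ m ∈ range (n / 2), C ((n - m - 1).choose m : R) * X ^ (n - 2 * m - 2) = fibPoly R n := by
  obtain ⟨k, rfl⟩ := he
  obtain ⟨j, rfl⟩ := Nat.exists_eq_add_one_of_ne_zero (by omega : k ≠ 0)
  rw [show j + 1 + (j + 1) = 2 * j + 1 + 1 by ring, fibPoly_succ_eq_sum_range (K := j + 1) (by omega),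
    show (2 * j + 1 + 1) / 2 = j + 1 by omega, mul_sum]
  refine sum_congr rfl fun m hm => ?_
  rw [mem_range] at hm
  rw [mul_left_comm, ← pow_succ', show 2 * j + 1 + 1 - m - 1 = 2 * j + 1 - m by omega,
    show 2 * j + 1 + 1 - 2 * m - 2 + 1 = 2 * j + 1 - 2 * m by omega]

theorem fibPoly_eval_two_mul_sinh_mul_cosh {n : ℕ} (hn : Even n) (t : ℝ) :
    (fibPoly ℝ n).eval (2 * sinh t) * cosh t = sinh (n * t) := by
  have h := fibPoly_eval_add_mul_sub (u := exp t) (v := -exp (-t))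
    (by rw [mul_neg, ← exp_add, add_neg_cancel, exp_zero]) n
  rw [hn.neg_pow, ← exp_nat_mul, ← exp_nat_mul, mul_neg, ← sub_eq_add_neg, sub_neg_eq_add,
    show exp t - exp (-t) = 2 * sinh t by rw [sinh_eq]; ring] at h
  rw [sinh_eq (n * t), cosh_eq t]
  linear_combination h / 2

theorem Chebyshev.U_real_eq_prod (n : ℕ) :
    Chebyshev.U ℝ n =
      Polynomial.C (2 ^ n) * ∏ k ∈ range n, (X - Polynomial.C (cos ((k + 1) * π / (n + 1)))) := by
  have hinj : Set.InjOn (fun k : ℕ => cos ((k + 1) * π / (n + 1))) (range n) :=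
    nodup_map_iff_injOn.mp (Chebyshev.roots_U_real_nodup n)
  have hcard : (Chebyshev.U ℝ n).roots.card = (Chebyshev.U ℝ n).natDegree := by
    rw [Chebyshev.roots_U_real, Chebyshev.natDegree_U_natCast, ← Finset.card_def,
      card_image_of_injOn hinj, card_range]
  conv_lhs => rw [← C_leadingCoeff_mul_prod_multiset_X_sub_C hcard]
  rw [Chebyshev.leadingCoeff_U_natCast, Chebyshev.roots_U_real, ← Finset.prod_eq_multiset_prod,
    prod_image hinj]

end Polynomial

theorem Finset.prod_Ico_one_eq_prod_pairs {M : Type*} [CommMonoid M] (g : ℕ → M) (n : ℕ) :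
    ∏ k ∈ Ico 1 n, g k =
      (∏ k ∈ (Ico 1 n).filter (fun k => 2 * k < n), g k * g (n - k)) *
        ∏ k ∈ (Ico 1 n).filter (fun k => 2 * k = n), g k := by
  have hupper : ∏ k ∈ (Ico 1 n).filter (fun k => n < 2 * k), g k
      = ∏ k ∈ (Ico 1 n).filter (fun k => 2 * k < n), g (n - k) := by
    refine prod_nbij' (n - ·) (n - ·) ?_ ?_ ?_ ?_ ?_ <;> intro k hk <;>
      simp only [mem_filter, mem_Ico] at hk ⊢
    all_goals first | omega | congr 1; omega
  rw [prod_mul_distrib, ← hupper, mul_assoc, ← prod_union, ← prod_union]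
  · congr 1
    ext k
    simp only [mem_union, mem_filter, mem_Ico]
    omega
  all_goals
    rw [disjoint_left]
    intro k
    simp only [mem_union, mem_filter, mem_Ico]
    omega

theorem Real.sinh_nat_mul_eq_sinh_mul_prod {n : ℕ} (hn : n ≠ 0) (t : ℝ) :
    sinh (n * t) = sinh t * ∏ k ∈ Ico 1 n, (2 * cosh t - 2 * cos (π * k / n)) := by
  obtain ⟨N, rfl⟩ := Nat.exists_eq_add_one_of_ne_zero hn
  have h := Polynomial.Chebyshev.U_real_cosh t N
  rw [Polynomial.Chebyshev.U_real_eq_prod, eval_mul, eval_C, eval_prod] at h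
  push_cast at h ⊢
  rw [prod_Ico_eq_prod_range, Nat.add_sub_cancel, ← h, mul_comm,
    show (2 : ℝ) ^ N = 2 ^ #(range N) by rw [card_range], pow_card_mul_prod]
  congr 1
  refine prod_congr rfl fun k _ => ?_
  simp only [eval_sub, eval_X, eval_C]
  push_cast
  ring_nf

theorem sinh_nat_mul_eq_mul_eval_V {n : ℕ} (hn : n ≠ 0) (t : ℝ) :
    sinh (n * t) = sinh t * (if Even n then 2 * cosh t else 1) * (V n).eval (2 * sinh t) := by
  have hpair : ∀ k ∈ (Ico 1 n).filter (fun k => 2 * k < n),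
      (2 * cosh t - 2 * cos (π * k / n)) * (2 * cosh t - 2 * cos (π * (n - k : ℕ) / n)) =
        (X ^ 2 + C (4 * sin (π * k / n) ^ 2)).eval (2 * sinh t) := by
    intro k hk
    have hkn : k ≤ n := by simp only [mem_filter, mem_Ico] at hk; omega
    have hcos : cos (π * (n - k : ℕ) / n) = -cos (π * k / n) := by
      rw [Nat.cast_sub hkn, mul_sub, sub_div, mul_div_cancel_right₀ _ (by positivity), cos_pi_sub]
    simp only [hcos, eval_add, eval_pow, eval_X, eval_C]
    linear_combination 4 * cosh_sq' t - 4 * sin_sq_add_cos_sq (π * k / n)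
  have hmiddle : ∏ k ∈ (Ico 1 n).filter (fun k => 2 * k = n), (2 * cosh t - 2 * cos (π * k / n)) =
      if Even n then 2 * cosh t else 1 := by
    split_ifs with heven
    · obtain ⟨j, rfl⟩ := heven
      have hj : (j : ℝ) ≠ 0 := by exact_mod_cast (by omega : j ≠ 0)
      rw [show (Ico 1 (j + j)).filter (fun k => 2 * k = j + j) = {j} by
          ext; simp only [mem_filter, mem_Ico, mem_singleton]; omega,
        prod_singleton, Nat.cast_add, show π * j / (j + j) = π / 2 by field_simp; ring,
        cos_pi_div_two, mul_zero, sub_zero]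
    · rw [filter_false_of_mem fun k _ hk => heven ⟨k, by omega⟩, prod_empty]
  rw [sinh_nat_mul_eq_sinh_mul_prod hn, prod_Ico_one_eq_prod_pairs, prod_congr rfl hpair, hmiddle,
    V, eval_prod]
  ring

theorem Real.exists_two_mul_sinh_eq (x : ℝ) : ∃ t, 2 * sinh t = x :=
  ⟨arsinh (x / 2), by rw [sinh_arsinh]; ring⟩

theorem X_mul_V_of_even {n : ℕ} (hn : n ≠ 0) (he : Even n) : X * V n = fibPoly ℝ n := by
  refine Polynomial.funext fun x => ?_
  obtain ⟨t, rfl⟩ := exists_two_mul_sinh_eq x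
  have h := fibPoly_eval_two_mul_sinh_mul_cosh he t
  rw [sinh_nat_mul_eq_mul_eval_V hn, if_pos he] at h
  rw [eval_mul, eval_X]
  refine mul_right_cancel₀ (cosh_pos t).ne' ?_
  linear_combination -h

theorem X_mul_V_of_odd {n : ℕ} (ho : Odd n) :
    X * V n = fibPoly ℝ (n + 1) + fibPoly ℝ (n - 1) := by
  obtain ⟨k, rfl⟩ := ho
  refine Polynomial.funext fun x => ?_
  obtain ⟨t, rfl⟩ := exists_two_mul_sinh_eq x
  have hup := fibPoly_eval_two_mul_sinh_mul_cosh (n := 2 * k + 1 + 1) ⟨k + 1, by ring⟩ t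
  have hdown := fibPoly_eval_two_mul_sinh_mul_cosh (even_two_mul k) t
  have hV := sinh_nat_mul_eq_mul_eval_V (n := 2 * k + 1) (by omega) t
  rw [if_neg (Nat.not_even_iff_odd.mpr (odd_two_mul_add_one k)), mul_one] at hV
  have hsum : sinh ((2 * k + 1 + 1 : ℕ) * t) + sinh ((2 * k : ℕ) * t) =
      2 * sinh ((2 * k + 1 : ℕ) * t) * cosh t := by
    rw [show ((2 * k + 1 + 1 : ℕ) : ℝ) * t = (2 * k + 1 : ℕ) * t + t by push_cast; ring,
      show ((2 * k : ℕ) : ℝ) * t = (2 * k + 1 : ℕ) * t - t by push_cast; ring, sinh_add, sinh_sub]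
    ring
  rw [Nat.add_sub_cancel, eval_mul, eval_X, eval_add]
  refine mul_right_cancel₀ (cosh_pos t).ne' ?_
  linear_combination -hup - hdown - hsum - 2 * cosh t * hV

theorem cast_mul_factorial_pred_div_factorial {n : ℕ} (hn : n ≠ 0) :
    (n : ℝ) * (n - 1).factorial / n.factorial = 1 := by
  rw [div_eq_one_iff_eq (by positivity)]
  exact_mod_cast Nat.mul_factorial_pred hn

theorem cast_mul_factorial_div_eq_choose_add_choose {n m : ℕ} (h : 2 * m + 2 ≤ n) :
    (n : ℝ) * (n - (m + 1) - 1).factorial / ((m + 1).factorial * (n - 2 * (m + 1)).factorial) =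
      (n - (m + 1)).choose (m + 1) + (n - (m + 1) - 1).choose m := by
  obtain ⟨a, rfl⟩ := Nat.exists_eq_add_of_le h
  rw [show 2 * m + 2 + a - (m + 1) - 1 = m + a by omega,
    show 2 * m + 2 + a - 2 * (m + 1) = a by omega, show 2 * m + 2 + a - (m + 1) = m + 1 + a by omega,
    Nat.cast_add_choose, Nat.cast_add_choose, show m + 1 + a = m + a + 1 by ring,
    Nat.factorial_succ (m + a), Nat.factorial_succ m]
  push_cast
  field_simp
  ring

theorem X_mul_sum_lucas_coeff_of_odd {n : ℕ} (ho : Odd n) :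
    X * ∑ m ∈ range ((n - 1) / 2 + 1),
        C ((n : ℝ) * (n - m - 1).factorial / (m.factorial * (n - 2 * m).factorial)) *
          X ^ (n - 2 * m - 1) =
      fibPoly ℝ (n + 1) + fibPoly ℝ (n - 1) := by
  obtain ⟨k, rfl⟩ := ho
  rcases k with _ | k
  · simp [fibPoly_add_two]
  rw [show 2 * (k + 1) + 1 - 1 = 2 * k + 1 + 1 by omega, show (2 * k + 1 + 1) / 2 + 1 = k + 1 + 1 by omega,
    mul_sum, sum_range_succ' _ (k + 1), fibPoly_succ_eq_sum_range (K := k + 1 + 1) (by omega),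
    sum_range_succ' _ (k + 1), fibPoly_succ_eq_sum_range (K := k + 1) (by omega), add_right_comm,
    ← sum_add_distrib]
  congr 1
  · refine sum_congr rfl fun m hm => ?_
    rw [mem_range] at hm
    rw [cast_mul_factorial_div_eq_choose_add_choose (by omega), mul_left_comm, ← pow_succ', C_add,
      add_mul, show 2 * (k + 1) + 1 - 2 * (m + 1) - 1 + 1 = 2 * k + 1 - 2 * m by omega,
      show 2 * (k + 1) + 1 - 2 * (m + 1) = 2 * k + 1 - 2 * m by omega,
      show 2 * (k + 1) + 1 - (m + 1) - 1 = 2 * k + 1 - m by omega]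
  · simp only [Nat.sub_zero, mul_zero, Nat.factorial_zero, Nat.cast_one, one_mul,
      Nat.choose_zero_right, C_1]
    rw [cast_mul_factorial_pred_div_factorial (by omega), C_1, one_mul, ← pow_succ',
      Nat.sub_add_cancel (by omega)]

/-- Explicit formulas for `V_n`: for odd `n`,
`V_n(x) = ∑_{m=0}^{(n−1)/2} [n(n−m−1)!/(m!(n−2m)!)] x^{n−2m−1}`, and for even `n`,
`V_n(x) = ∑_{m=0}^{n/2−1} C(n−m−1, m) x^{n−2m−2}`. -/
theorem V_explicit (n : ℕ) (hn : 1 ≤ n) :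
    (Odd n → V n = ∑ m ∈ Finset.range ((n - 1) / 2 + 1),
      Polynomial.C (((n : ℝ) * (n - m - 1).factorial) / ((m.factorial : ℝ) * (n - 2 * m).factorial))
        * Polynomial.X ^ (n - 2 * m - 1)) ∧
    (Even n → V n = ∑ m ∈ Finset.range (n / 2),
      Polynomial.C (((n - m - 1).choose m : ℝ)) * Polynomial.X ^ (n - 2 * m - 2)) :=
  ⟨fun ho => mul_left_cancel₀ X_ne_zero
      ((X_mul_V_of_odd ho).trans (X_mul_sum_lucas_coeff_of_odd ho).symm),
    fun he => mul_left_cancel₀ X_ne_zero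
      ((X_mul_V_of_even (by omega) he).trans (X_mul_sum_choose_of_even (by omega) he).symm)⟩
end

section
/- For all integers n ≥ 1 and m ≥ 0, the quantity n(n−m−1)!/(m!(n−2m)!) (for 0 ≤ m ≤ (n−1)/2) is an integer, equal to C(n−m, m) + C(n−m−1, m−1). -/
/-!
Writing `m = k + 1` and `n - 2m = b`, the identity becomes
`(2k + b + 2)(k + b)! = (k + b + 1)! + (k + 1)(k + b)!`, and the two summands are
`(k + 1)! b! C(k + b + 1, k + 1)` and `(k + 1)! b! C(k + b, k)`.
-/

open Nat

theorem factorial_mul_factorial_mul_choose_add_choose (k b : ℕ) :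
    (k + 1)! * b ! * ((k + b + 1).choose (k + 1) + (k + b).choose k) =
      (2 * k + b + 2) * (k + b)! := by
  have hchoose_succ : (k + b + 1).choose (k + 1) * b ! * (k + 1)! = (k + b + 1)! := by
    rw [show k + b + 1 = b + (k + 1) by omega]
    exact add_choose_mul_factorial_mul_factorial b (k + 1)
  have hchoose : (k + b).choose k * b ! * k ! = (k + b)! := by
    rw [add_comm k b]
    exact add_choose_mul_factorial_mul_factorial b k
  calc (k + 1)! * b ! * ((k + b + 1).choose (k + 1) + (k + b).choose k)
      = (k + b + 1).choose (k + 1) * b ! * (k + 1)!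
          + (k + 1) * ((k + b).choose k * b ! * k !) := by
        rw [factorial_succ k]; ring
    _ = (k + b + 1) * (k + b)! + (k + 1) * (k + b)! := by
        rw [hchoose_succ, hchoose, factorial_succ]
    _ = (2 * k + b + 2) * (k + b)! := by ring

/-- For `n ≥ 1` and `0 ≤ m ≤ (n−1)/2`, the quantity `n(n−m−1)!/(m!(n−2m)!)` is an
integer, equal to `C(n−m, m) + C(n−m−1, m−1)` (where `C(a, −1) = 0`). -/
theorem V_coeff_integral (n m : ℕ) (hn : 1 ≤ n) (hm : 2 * m ≤ n - 1) :
    (m.factorial * (n - 2 * m).factorial) ∣ n * (n - m - 1).factorial ∧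
    n * (n - m - 1).factorial = m.factorial * (n - 2 * m).factorial *
      ((n - m).choose m + if m = 0 then 0 else (n - m - 1).choose (m - 1)) := by
  suffices key : n * (n - m - 1).factorial = m.factorial * (n - 2 * m).factorial *
      ((n - m).choose m + if m = 0 then 0 else (n - m - 1).choose (m - 1)) from
    ⟨Dvd.intro _ key.symm, key⟩
  cases m with
  | zero => simpa using mul_factorial_pred (show n ≠ 0 by omega)
  | succ k =>
    obtain ⟨b, rfl⟩ : ∃ b, n = 2 * k + b + 2 := ⟨n - 2 * k - 2, by omega⟩
    rw [show 2 * k + b + 2 - (k + 1) - 1 = k + b by omega,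
      show 2 * k + b + 2 - 2 * (k + 1) = b by omega,
      show 2 * k + b + 2 - (k + 1) = k + b + 1 by omega,
      if_neg (succ_ne_zero k), add_tsub_cancel_right]
    exact (factorial_mul_factorial_mul_choose_add_choose k b).symm
end

section
/- Define W_n(x) = ∏_{1 ≤ k < n/2, gcd(k,n)=1} (x^2 + 4 sin^2(πk/n)) with W_1 = W_2 = 1. Then for every n ≥ 1, V_n(x) = ∏_{d ∣ n} W_d(x), and consequently W_n(x) = ∏_{d ∣ n} V_d(x)^{μ(n/d)}. -/
open Finset Polynomial Real

/-!
Every fraction `k / n` with `0 < k / n < 1/2` has a unique reduced form `j / d` with `d ∣ n`,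
namely `d = n / gcd(k, n)` and `j = k / gcd(k, n)`. Grouping the factors of `V_n` by the
denominator of `k / n` gives `V_n = ∏_{d ∣ n} W_d`, and Möbius inversion in the field of
rational functions, where every `V_d` is invertible, yields the second identity.
-/

open scoped ArithmeticFunction.Moebius

theorem Nat.Coprime.gcd_mul_right_eq {j d m : ℕ} (h : j.Coprime d) : (j * m).gcd (d * m) = m := by
  rw [Nat.gcd_mul_right, h, one_mul]

theorem mul_mem_filter_Ico_iff {j d m : ℕ} (hm : 0 < m) :
    j * m ∈ (Ico 1 (d * m)).filter (fun k => 2 * k < d * m) ↔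
      j ∈ (Ico 1 d).filter (fun k => 2 * k < d) := by
  simp only [mem_filter, mem_Ico, Nat.one_le_iff_ne_zero, ← mul_assoc, Nat.mul_lt_mul_right hm,
    mul_ne_zero_iff, hm.ne', ne_eq, not_false_eq_true, and_true]

theorem prod_filter_Ico_eq_prod_divisors_prod_coprime {K M : Type*} [Semifield K] [CharZero K]
    [CommMonoid M] (f : K → M) (n : ℕ) :
    ∏ k ∈ (Ico 1 n).filter (fun k => 2 * k < n), f (k / n) =
      ∏ d ∈ n.divisors, ∏ j ∈ (Ico 1 d).filter (fun j => 2 * j < d ∧ j.gcd d = 1), f (j / d) := by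
  simp_rw [← filter_filter]
  rw [← Nat.prod_divisorsAntidiagonal (fun d _ =>
    ∏ j ∈ ((Ico 1 d).filter (fun j => 2 * j < d)).filter (fun j => j.gcd d = 1), f (j / d)),
    prod_sigma']
  refine (prod_nbij' (fun p => p.2 * p.1.2) (fun k => ⟨(n / k.gcd n, k.gcd n), k / k.gcd n⟩)
    ?_ ?_ ?_ ?_ ?_).symm
  · rintro ⟨⟨d, m⟩, j⟩ hp
    simp only [mem_sigma, Nat.mem_divisorsAntidiagonal,
      mem_filter (p := fun j : ℕ => j.gcd _ = 1)] at hp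
    obtain ⟨⟨rfl, hn⟩, hj, -⟩ := hp
    exact (mul_mem_filter_Ico_iff (Nat.pos_of_ne_zero (right_ne_zero_of_mul hn))).2 hj
  · intro k hk
    have hg : 0 < k.gcd n := Nat.gcd_pos_of_pos_left n (by simp at hk; omega)
    have hgk := Nat.div_mul_cancel (Nat.gcd_dvd_left k n)
    have hgn := Nat.div_mul_cancel (Nat.gcd_dvd_right k n)
    simp only [mem_sigma, Nat.mem_divisorsAntidiagonal, mem_filter (p := fun j : ℕ => j.gcd _ = 1)]
    refine ⟨⟨hgn, ?_⟩, (mul_mem_filter_Ico_iff hg).1 (by rwa [hgk, hgn]),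
      Nat.coprime_div_gcd_div_gcd hg⟩
    rintro rfl
    simp at hk
  · rintro ⟨⟨d, m⟩, j⟩ hp
    simp only [mem_sigma, Nat.mem_divisorsAntidiagonal,
      mem_filter (p := fun j : ℕ => j.gcd _ = 1)] at hp
    obtain ⟨⟨rfl, hn⟩, -, hjd⟩ := hp
    have hm : 0 < m := Nat.pos_of_ne_zero (right_ne_zero_of_mul hn)
    simp only [Nat.Coprime.gcd_mul_right_eq hjd, Nat.mul_div_cancel _ hm]
  · intro k _
    simp only [Nat.div_mul_cancel (Nat.gcd_dvd_left k n)]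
  · rintro ⟨⟨d, m⟩, j⟩ hp
    simp only [mem_sigma, Nat.mem_divisorsAntidiagonal] at hp
    obtain ⟨⟨rfl, hn⟩, -⟩ := hp
    have hm : (m : K) ≠ 0 := by exact_mod_cast right_ne_zero_of_mul hn
    simp only [Nat.cast_mul, mul_div_mul_right _ _ hm]

theorem prod_zpow_moebius_mul_prod_filter_eq_neg_one {G₀ : Type*} [CommGroupWithZero G₀]
    (g : ℕ → G₀) (n : ℕ) (hg : ∀ d ∈ n.divisors, g d ≠ 0) :
    (∏ d ∈ n.divisors, g d ^ μ (n / d)) * ∏ d ∈ n.divisors.filter (fun d => μ (n / d) = -1), g d =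
      ∏ d ∈ n.divisors.filter (fun d => μ (n / d) = 1), g d := by
  rw [prod_filter, prod_filter, ← prod_mul_distrib]
  refine prod_congr rfl fun d hd => ?_
  rcases ArithmeticFunction.moebius_eq_or (n / d) with h | h | h <;> simp [h, hg d hd]

theorem V_eq_prod_divisors_W (n : ℕ) : V n = ∏ d ∈ n.divisors, W d := by
  simpa only [V, W, mul_div_assoc] using
    prod_filter_Ico_eq_prod_divisors_prod_coprime (fun t : ℝ => X ^ 2 + C (4 * sin (π * t) ^ 2)) n

theorem V_monic (n : ℕ) : (V n).Monic :=
  monic_prod_of_monic _ _ fun _ _ => monic_X_pow_add_C _ two_ne_zero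

theorem W_monic (n : ℕ) : (W n).Monic :=
  monic_prod_of_monic _ _ fun _ _ => monic_X_pow_add_C _ two_ne_zero

theorem algebraMap_W_eq_prod_zpow_moebius {n : ℕ} (hn : 0 < n) :
    algebraMap ℝ[X] (RatFunc ℝ) (W n) =
      ∏ d ∈ n.divisors, algebraMap ℝ[X] (RatFunc ℝ) (V d) ^ μ (n / d) := by
  have hinj := RatFunc.algebraMap_injective ℝ
  have inversion := (ArithmeticFunction.prod_eq_iff_prod_pow_moebius_eq_of_nonzero
    (fun m _ => (map_ne_zero_iff _ hinj).2 (W_monic m).ne_zero)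
    (fun m _ => (map_ne_zero_iff _ hinj).2 (V_monic m).ne_zero)).1
    (fun m _ => by rw [← map_prod, V_eq_prod_divisors_W]) n hn
  rw [← inversion, Nat.prod_divisorsAntidiagonal'
    (fun a b => algebraMap ℝ[X] (RatFunc ℝ) (V b) ^ μ a)]

theorem V_W_moebius_general (n : ℕ) :
    (V n = ∏ d ∈ n.divisors, W d) ∧
    (W n * ∏ d ∈ n.divisors.filter (fun d => ArithmeticFunction.moebius (n / d) = -1), V d =
      ∏ d ∈ n.divisors.filter (fun d => ArithmeticFunction.moebius (n / d) = 1), V d) := by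
  refine ⟨V_eq_prod_divisors_W n, ?_⟩
  rcases n.eq_zero_or_pos with rfl | hn
  · simp [W]
  have hinj := RatFunc.algebraMap_injective ℝ
  apply hinj
  rw [map_mul, map_prod, map_prod, algebraMap_W_eq_prod_zpow_moebius hn,
    prod_zpow_moebius_mul_prod_filter_eq_neg_one]
  exact fun d _ => (map_ne_zero_iff _ hinj).2 (V_monic d).ne_zero

/-- `V_n = ∏_{d ∣ n} W_d`, and consequently `W_n = ∏_{d ∣ n} V_d^{μ(n/d)}`
(the latter written multiplicatively, splitting the product according to the
sign of `μ(n/d)`). -/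
theorem V_W_moebius (n : ℕ) (hn : 1 ≤ n) :
    (V n = ∏ d ∈ n.divisors, W d) ∧
    (W n * ∏ d ∈ n.divisors.filter (fun d => ArithmeticFunction.moebius (n / d) = -1), V d =
      ∏ d ∈ n.divisors.filter (fun d => ArithmeticFunction.moebius (n / d) = 1), V d) :=
  V_W_moebius_general n
end

section
/- For every non-negative integer k, the polynomial F_{2k+1}(x_1,…,x_{2k+1}) is divisible by x_1 − k in ℚ[x_1,…,x_{2k+1}]. -/
open Finset

/-- The coefficient ring `ℚ[x_1, x_2, x_3, …]`. -/
abbrev R : Type := MvPolynomial ℕ ℚ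

/-- The formal exponential `exp f = ∑_{k ≥ 0} f^k/k!` of a power series `f`
with zero constant term, defined coefficientwise. -/
noncomputable def expS (f : PowerSeries R) : PowerSeries R :=
  PowerSeries.mk fun n =>
    ∑ k ∈ Finset.range (n + 1),
      algebraMap ℚ R (1 / k.factorial) * PowerSeries.coeff n (f ^ k)

/-- The power series `−log(1+t) = ∑_{n ≥ 1} (−1)^n t^n/n`. -/
noncomputable def negLog1pt : PowerSeries R :=
  PowerSeries.mk fun n => if n = 0 then 0 else algebraMap ℚ R ((-1) ^ n / n)

/-- `2 ∑_{ν ≥ 1} (B_{2ν}/(2ν)!)(−log(1+t))^{2ν} x_{2ν}`, defined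
coefficientwise. -/
noncomputable def G : PowerSeries R :=
  PowerSeries.mk fun m =>
    ∑ ν ∈ Finset.Icc 1 m,
      algebraMap ℚ R (2 * bernoulli (2 * ν) / (2 * ν).factorial) * MvPolynomial.X (2 * ν) *
        PowerSeries.coeff m (negLog1pt ^ (2 * ν))

/-- The binomial series `(1+t)^{x_1} = ∑_{n ≥ 0} (x_1)_n t^n/n!`, where
`(x)_n = x(x−1)⋯(x−n+1)` is the falling factorial. -/
noncomputable def onePlusTPowX1 : PowerSeries R :=
  PowerSeries.mk fun n =>
    algebraMap ℚ R (1 / n.factorial) *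
      ∏ i ∈ Finset.range n, (MvPolynomial.X 1 - algebraMap ℚ R i)

/-- The Lehmer polynomials `F_k`, defined by
`(1+t)^{x_1} exp(2 ∑_{ν ≥ 1} (B_{2ν}/(2ν)!)(−log(1+t))^{2ν} x_{2ν}) = ∑_{k ≥ 0} F_k t^k/k!`. -/
noncomputable def F (k : ℕ) : R :=
  algebraMap ℚ R k.factorial * PowerSeries.coeff k (onePlusTPowX1 * expS G)

/-!
The substitution `t ↦ -t/(1+t)` is an involution of power series that exchanges `log(1+t)` and
`-log(1+t)`. It therefore fixes `G`, an even series in `-log(1+t)`, and hence `exp G`. A fixed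
series agrees, up to `t^(2k+2)`, with a polynomial in the fixed series `t²/(1+t)`, and no
`(1+t)^k (t²/(1+t))^m` has a `t^(2k+1)` term. So the `t^(2k+1)` coefficient of
`(1+t)^k exp G` vanishes; it is `F_{2k+1}/(2k+1)!` at `x_1 = k`, because the coefficients of
`(1+t)^{x_1}` reduce to those of `(1+t)^k` modulo `x_1 - k`.
-/

open PowerSeries

section Subst

variable {A : Type*} [CommRing A]

theorem coeff_pow_eq_zero_of_lt {a : A⟦X⟧} (ha : constantCoeff a = 0) {n d : ℕ} (h : n < d) :
    coeff n (a ^ d) = 0 :=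
  coeff_of_lt_order _ ((Nat.cast_lt.mpr h).trans_le (le_order_pow_of_constantCoeff_eq_zero d ha))

theorem X_pow_succ_dvd_of_coeff_eq_zero {f : A⟦X⟧} {n : ℕ} (hf : X ^ n ∣ f)
    (hn : coeff n f = 0) : X ^ (n + 1) ∣ f :=
  X_pow_dvd_iff.2 fun i hi =>
    (Nat.lt_succ_iff_lt_or_eq.1 hi).elim (X_pow_dvd_iff.1 hf i) (· ▸ hn)

theorem coeff_subst_eq_sum_range {a : A⟦X⟧} (ha : constantCoeff a = 0)
    (f : A⟦X⟧) (n : ℕ) :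
    coeff n (f.subst a) = ∑ d ∈ Finset.range (n + 1), coeff d f * coeff n (a ^ d) := by
  rw [coeff_subst' (.of_constantCoeff_zero' ha)]
  refine finsum_eq_sum_of_support_subset _ fun d hd => ?_
  by_contra hdn
  simp only [Finset.coe_range, Set.mem_Iio, not_lt] at hdn
  exact hd (by simp only [coeff_pow_eq_zero_of_lt ha (by omega : n < d), smul_zero])

theorem constantCoeff_subst_of_constantCoeff_eq_zero {a : A⟦X⟧} (ha : constantCoeff a = 0)
    (f : A⟦X⟧) : constantCoeff (f.subst a) = constantCoeff f := by
  simpa using coeff_subst_eq_sum_range ha f 0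

end Subst

section Involution

variable (A : Type*) [CommRing A]

noncomputable def invOneAddX : A⟦X⟧ := mk fun n => (-1 : A) ^ n

noncomputable def negXDivOneAddX : A⟦X⟧ := -X * invOneAddX A

variable {A}

variable (A) in
theorem invOneAddX_mul_one_add_X : invOneAddX A * (1 + X) = 1 := by
  have h := congrArg (rescale (-1 : A)) (mk_one_mul_one_sub_eq_one (S := A))
  rw [map_mul, map_sub, map_one, rescale_X, rescale_mk] at h
  simpa [invOneAddX, sub_eq_add_neg] using h

theorem constantCoeff_invOneAddX : constantCoeff (invOneAddX A) = 1 := by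
  simp [invOneAddX, ← coeff_zero_eq_constantCoeff_apply]

theorem constantCoeff_negXDivOneAddX : constantCoeff (negXDivOneAddX A) = 0 := by
  simp [negXDivOneAddX]

theorem hasSubst_negXDivOneAddX : HasSubst (negXDivOneAddX A) :=
  .of_constantCoeff_zero' constantCoeff_negXDivOneAddX

theorem one_add_negXDivOneAddX : 1 + negXDivOneAddX A = invOneAddX A := by
  rw [negXDivOneAddX]
  linear_combination (-1 : A⟦X⟧) * invOneAddX_mul_one_add_X A

theorem invOneAddX_subst_negXDivOneAddX : (invOneAddX A).subst (negXDivOneAddX A) = 1 + X := by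
  have h := congrArg (substAlgHom (R := A) (hasSubst_negXDivOneAddX (A := A)))
    (invOneAddX_mul_one_add_X A)
  rw [map_mul, map_add, map_one, coe_substAlgHom, subst_X hasSubst_negXDivOneAddX,
    one_add_negXDivOneAddX] at h
  linear_combination
    (1 + X) * h - (invOneAddX A).subst (negXDivOneAddX A) * invOneAddX_mul_one_add_X A

theorem derivative_invOneAddX : d⁄dX A (invOneAddX A) = -invOneAddX A ^ 2 := by
  have h := congrArg (d⁄dX A) (invOneAddX_mul_one_add_X A)
  simp only [Derivation.leibniz, map_add, derivative_X, smul_eq_mul,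
    Derivation.map_one_eq_zero] at h
  linear_combination invOneAddX A * h - d⁄dX A (invOneAddX A) * invOneAddX_mul_one_add_X A

theorem derivative_negXDivOneAddX : d⁄dX A (negXDivOneAddX A) = -invOneAddX A ^ 2 := by
  simp only [negXDivOneAddX, Derivation.leibniz, map_neg, derivative_X, derivative_invOneAddX,
    smul_eq_mul]
  linear_combination invOneAddX A * invOneAddX_mul_one_add_X A

end Involution

section Log

variable {A : Type*} [CommRing A] [Algebra ℚ A]

theorem derivative_log_eq_invOneAddX : d⁄dX A (log A) = invOneAddX A := by
  rw [deriv_log, invOneAddX]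
  simp

theorem log_subst_negXDivOneAddX : (log A).subst (negXDivOneAddX A) = -log A := by
  have := IsAddTorsionFree.of_module_rat A
  refine derivative.ext ?_ ?_
  · rw [derivative_subst hasSubst_negXDivOneAddX, derivative_log_eq_invOneAddX,
      invOneAddX_subst_negXDivOneAddX, derivative_negXDivOneAddX, map_neg,
      derivative_log_eq_invOneAddX]
    linear_combination (-invOneAddX A) * invOneAddX_mul_one_add_X A
  · rw [constantCoeff_subst_of_constantCoeff_eq_zero constantCoeff_negXDivOneAddX, map_neg,
      constantCoeff_log, neg_zero]

end Log

section Invariant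

variable {A : Type*} [CommRing A]

variable (A) in
noncomputable def sqDivOneAddX : A⟦X⟧ := X ^ 2 * invOneAddX A

theorem sqDivOneAddX_pow (m : ℕ) :
    sqDivOneAddX A ^ m = X ^ (2 * m) * invOneAddX A ^ m := by
  rw [sqDivOneAddX, mul_pow, ← pow_mul]

theorem coeff_one_add_X_pow (d n : ℕ) : coeff n ((1 + X : A⟦X⟧) ^ d) = d.choose n := by
  have h : (1 + X : A⟦X⟧) ^ d = ((1 + Polynomial.X) ^ d : Polynomial A) := by simp
  rw [h, Polynomial.coeff_coe, Polynomial.coeff_one_add_X_pow]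

theorem sqDivOneAddX_subst_negXDivOneAddX :
    (sqDivOneAddX A).subst (negXDivOneAddX A) = sqDivOneAddX A := by
  rw [sqDivOneAddX, subst_mul hasSubst_negXDivOneAddX, subst_pow hasSubst_negXDivOneAddX,
    subst_X hasSubst_negXDivOneAddX, invOneAddX_subst_negXDivOneAddX, negXDivOneAddX]
  linear_combination X ^ 2 * invOneAddX A * invOneAddX_mul_one_add_X A

theorem coeff_subst_negXDivOneAddX_of_X_pow_dvd {f : A⟦X⟧} {n : ℕ} (hf : X ^ n ∣ f) :
    coeff n (f.subst (negXDivOneAddX A)) = (-1) ^ n * coeff n f := by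
  obtain ⟨h, rfl⟩ := hf
  have hpow : negXDivOneAddX A ^ n = X ^ n * (-invOneAddX A) ^ n := by
    rw [negXDivOneAddX, neg_mul, ← mul_neg, mul_pow]
  rw [subst_mul hasSubst_negXDivOneAddX, subst_pow hasSubst_negXDivOneAddX,
    subst_X hasSubst_negXDivOneAddX, hpow, mul_assoc, coeff_X_pow_mul', coeff_X_pow_mul']
  simp [coeff_zero_eq_constantCoeff_apply, constantCoeff_invOneAddX,
    constantCoeff_subst_of_constantCoeff_eq_zero constantCoeff_negXDivOneAddX]

theorem coeff_one_add_X_pow_mul_sqDivOneAddX_pow (k m : ℕ) :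
    coeff (2 * k + 1) ((1 + X : A⟦X⟧) ^ k * sqDivOneAddX A ^ m) = 0 := by
  rcases le_or_gt m k with hmk | hkm
  · have hunit : invOneAddX A ^ m * (1 + X) ^ m = 1 := by
      rw [← mul_pow, invOneAddX_mul_one_add_X, one_pow]
    have hpoly : (1 + X : A⟦X⟧) ^ k * sqDivOneAddX A ^ m = X ^ (2 * m) * (1 + X) ^ (k - m) := by
      rw [sqDivOneAddX_pow, ← Nat.sub_add_cancel hmk, pow_add, Nat.add_sub_cancel]
      linear_combination X ^ (2 * m) * (1 + X) ^ (k - m) * hunit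
    rw [hpoly, coeff_X_pow_mul', if_pos (by omega), coeff_one_add_X_pow,
      Nat.choose_eq_zero_of_lt (by omega), Nat.cast_zero]
  · rw [sqDivOneAddX_pow, mul_left_comm, coeff_X_pow_mul', if_neg (by omega)]

variable [IsAddTorsionFree A]

theorem coeff_one_add_X_pow_mul_eq_zero_of_X_pow_dvd (k : ℕ) {f : A⟦X⟧}
    (hf : f.subst (negXDivOneAddX A) = f) {n : ℕ} (hn : X ^ n ∣ f) :
    coeff (2 * k + 1) ((1 + X) ^ k * f) = 0 := by
  -- Downward induction on `n`: the coefficient of `X ^ n` vanishes by invariance if `n` is odd,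
  -- and is removed by subtracting a multiple of `sqDivOneAddX A ^ (n / 2)` if `n` is even.
  induction hd : 2 * k + 2 - n generalizing f n with
  | zero =>
    obtain ⟨h, rfl⟩ := (pow_dvd_pow X (by omega : 2 * k + 2 ≤ n)).trans hn
    rw [mul_left_comm, coeff_X_pow_mul', if_neg (by omega)]
  | succ d ih =>
    rcases Nat.even_or_odd n with heven | hodd
    · obtain ⟨m, rfl⟩ := heven.two_dvd
      set g := f - C (coeff (2 * m) f) * sqDivOneAddX A ^ m
      have hg : g.subst (negXDivOneAddX A) = g := by
        rw [subst_sub hasSubst_negXDivOneAddX, subst_mul hasSubst_negXDivOneAddX, subst_C,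
          subst_pow hasSubst_negXDivOneAddX, sqDivOneAddX_subst_negXDivOneAddX, hf]
        rfl
      have hgX : X ^ (2 * m) ∣ g :=
        dvd_sub hn (Dvd.dvd.mul_left ⟨_, sqDivOneAddX_pow m⟩ _)
      have hgc : coeff (2 * m) g = 0 := by
        rw [map_sub, coeff_C_mul, sqDivOneAddX_pow, coeff_X_pow_mul', if_pos le_rfl,
          Nat.sub_self, coeff_zero_eq_constantCoeff_apply, map_pow, constantCoeff_invOneAddX,
          one_pow, mul_one, sub_self]
      have := ih hg (X_pow_succ_dvd_of_coeff_eq_zero hgX hgc) (by omega)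
      rwa [mul_sub, map_sub, mul_left_comm, coeff_C_mul,
        coeff_one_add_X_pow_mul_sqDivOneAddX_pow, mul_zero, sub_zero] at this
    · have hc : coeff n f = -coeff n f := by
        conv_lhs => rw [← hf]
        rw [coeff_subst_negXDivOneAddX_of_X_pow_dvd hn, hodd.neg_one_pow, neg_one_mul]
      exact ih hf (X_pow_succ_dvd_of_coeff_eq_zero hn (self_eq_neg.1 hc)) (by omega)

theorem coeff_one_add_X_pow_mul_eq_zero_of_subst_eq (k : ℕ) {f : A⟦X⟧}
    (hf : f.subst (negXDivOneAddX A) = f) : coeff (2 * k + 1) ((1 + X) ^ k * f) = 0 :=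
  coeff_one_add_X_pow_mul_eq_zero_of_X_pow_dvd k hf (n := 0) (by simp)

end Invariant

theorem constantCoeff_negLog1pt : constantCoeff negLog1pt = 0 := by
  simp [negLog1pt, ← coeff_zero_eq_constantCoeff_apply]

theorem negLog1pt_eq_neg_log : negLog1pt = -log R := by
  ext n : 1
  rcases eq_or_ne n 0 with rfl | hn
  · simp [negLog1pt]
  · simp [negLog1pt, hn, pow_succ, neg_div]

theorem constantCoeff_G : constantCoeff G = 0 := by
  rw [← coeff_zero_eq_constantCoeff_apply, G, coeff_mk, Finset.Icc_eq_empty (by omega),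
    Finset.sum_empty]

theorem expS_eq_exp_subst {f : R⟦X⟧} (hf : constantCoeff f = 0) : expS f = (exp R).subst f := by
  ext n : 1
  rw [expS, coeff_mk, coeff_subst_eq_sum_range hf]
  simp

noncomputable def evenBernoulliSeries : R⟦X⟧ :=
  mk fun d => if d ≠ 0 ∧ Even d then
    algebraMap ℚ R (2 * bernoulli d / d.factorial) * MvPolynomial.X d else 0

theorem G_eq_evenBernoulliSeries_subst : G = evenBernoulliSeries.subst negLog1pt := by
  ext m : 1
  rw [coeff_subst' (.of_constantCoeff_zero' constantCoeff_negLog1pt), G, coeff_mk]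
  have hsupp : (Function.support fun d => coeff d evenBernoulliSeries • coeff m (negLog1pt ^ d))
      ⊆ (Finset.Icc 1 m).image (2 * ·) := by
    intro d hd
    rw [Function.mem_support] at hd
    have hdm : d ≤ m := by
      by_contra h
      exact hd (by rw [coeff_pow_eq_zero_of_lt constantCoeff_negLog1pt (by omega), smul_zero])
    obtain ⟨hd0, ν, rfl⟩ : d ≠ 0 ∧ Even d := by
      by_contra h
      exact hd (by rw [evenBernoulliSeries, coeff_mk, if_neg h, zero_smul])
    simp only [Finset.coe_image, Finset.coe_Icc, Set.mem_image, Set.mem_Icc]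
    exact ⟨ν, ⟨by omega, by omega⟩, by omega⟩
  rw [finsum_eq_sum_of_support_subset _ hsupp, Finset.sum_image fun a _ b _ h => by simpa using h]
  refine Finset.sum_congr rfl fun ν hν => ?_
  rw [evenBernoulliSeries, coeff_mk, if_pos ⟨by grind, even_two_mul ν⟩, smul_eq_mul]

theorem rescale_neg_one_evenBernoulliSeries :
    rescale (-1 : R) evenBernoulliSeries = evenBernoulliSeries := by
  ext d : 1
  rw [coeff_rescale, evenBernoulliSeries, coeff_mk]
  split_ifs with hd
  · rw [hd.2.neg_one_pow, one_mul]
  · rw [mul_zero]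

theorem negLog1pt_subst_negXDivOneAddX : negLog1pt.subst (negXDivOneAddX R) = -negLog1pt := by
  rw [negLog1pt_eq_neg_log, ← coe_substAlgHom hasSubst_negXDivOneAddX, map_neg, coe_substAlgHom,
    log_subst_negXDivOneAddX]

theorem G_subst_negXDivOneAddX : G.subst (negXDivOneAddX R) = G := by
  have hL : HasSubst negLog1pt := .of_constantCoeff_zero' constantCoeff_negLog1pt
  have hneg : -negLog1pt = ((-1 : R) • X : R⟦X⟧).subst negLog1pt := by
    rw [← coe_substAlgHom hL, map_smul, coe_substAlgHom, subst_X hL, neg_one_smul]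
  rw [G_eq_evenBernoulliSeries_subst, subst_comp_subst_apply hL hasSubst_negXDivOneAddX,
    negLog1pt_subst_negXDivOneAddX, hneg, ← subst_comp_subst_apply (.smul_X' _) hL,
    ← rescale_eq_subst, rescale_neg_one_evenBernoulliSeries]

theorem expS_G_subst_negXDivOneAddX : (expS G).subst (negXDivOneAddX R) = expS G := by
  rw [expS_eq_exp_subst constantCoeff_G,
    subst_comp_subst_apply (.of_constantCoeff_zero' constantCoeff_G) hasSubst_negXDivOneAddX,
    G_subst_negXDivOneAddX]

theorem X_one_sub_dvd_coeff_onePlusTPowX1_sub_choose (k n : ℕ) :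
    MvPolynomial.X 1 - algebraMap ℚ R k ∣ coeff n onePlusTPowX1 - k.choose n := by
  have hchoose : (k.choose n : R) =
      algebraMap ℚ R (1 / n.factorial) * (descPochhammer R n).eval (k : R) := by
    rw [descPochhammer_eval_eq_descFactorial, Nat.descFactorial_eq_factorial_mul_choose,
      Nat.cast_mul, ← mul_assoc, ← map_natCast (algebraMap ℚ R) n.factorial, ← map_mul,
      one_div_mul_cancel (by positivity), map_one, one_mul]
  have hcoeff : coeff n onePlusTPowX1 =
      algebraMap ℚ R (1 / n.factorial) * (descPochhammer R n).eval (MvPolynomial.X 1) := by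
    simp [onePlusTPowX1, descPochhammer_eval_eq_prod_range]
  rw [hchoose, hcoeff, ← mul_sub, map_natCast]
  exact (Polynomial.sub_dvd_eval_sub _ _ _).mul_left _

/-- For every `k ≥ 0`, `F_{2k+1}` is divisible by `x_1 − k` in `ℚ[x_1, x_2, …]`. -/
theorem X1_sub_k_dvd_F_odd (k : ℕ) :
    (MvPolynomial.X 1 - algebraMap ℚ R k) ∣ F (2 * k + 1) := by
  have hvanish : coeff (2 * k + 1) ((1 + X) ^ k * expS G) = 0 :=
    coeff_one_add_X_pow_mul_eq_zero_of_subst_eq k expS_G_subst_negXDivOneAddX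
  have hF : F (2 * k + 1) = algebraMap ℚ R (2 * k + 1).factorial *
      coeff (2 * k + 1) ((onePlusTPowX1 - (1 + X) ^ k) * expS G) := by
    rw [F, sub_mul, map_sub, hvanish, sub_zero]
  rw [hF, coeff_mul]
  refine dvd_mul_of_dvd_right (Finset.dvd_sum fun p _ => Dvd.dvd.mul_right ?_ _) _
  rw [map_sub, coeff_one_add_X_pow]
  exact X_one_sub_dvd_coeff_onePlusTPowX1_sub_choose k p.1
end

section
/- For every integer n ≥ 3 and every 1 ≤ m < φ(n)/2, the rational number (2B_{2m}/(2m)!) · ω_m(n) is an integer, where ω_m(n) is defined by the expansion W_n(x)/Φ_n(1) = 1 + 2 Σ_{m≥1} (B_{2m}/(2m)!) ω_m(n) x^{2m}. -/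
/-!
Put `Q(t) = ∏_{k} (t + 4 sin²(πk/n))`, so that `W_n(x) = Q(x²)` and `deg Q = φ(n)/2 =: d`.
For `ζ = e^{2πi/n}` one has `(Y - ζ^k)(Y - ζ^{n-k}) = (Y - 1)² + 4 sin²(πk/n) Y`, so pairing the
exponent `k` with `n - k` gives `Φ_n(Y) = Y^d Q((Y - 1)²/Y) = ∑ q_i (Y - 1)^{2i} Y^{d-i}`.
This change of basis is unitriangular with integer entries, so every additive subgroup of `ℝ`
containing the coefficients of `Φ_n(Y) - (Y - 1)^{2d}` contains `q_0, …, q_{d-1}`. Those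
coefficients are multiples of `Φ_n(1)`: for `n = p^r` because `Φ_n ≡ (Y - 1)^{φ(n)} mod p`, and
otherwise `Φ_n(1) = 1`. Hence `Φ_n(1)` divides `q_m = [x^{2m}] W_n` for `m < d`, and the claim
follows after cancelling `B_{2m} ≠ 0`.
-/

open Finset Polynomial Real

/-- `ω_m(n)`, defined by the expansion
`W_n(x)/Φ_n(1) = 1 + 2 ∑_{m ≥ 1} (B_{2m}/(2m)!) ω_m(n) x^{2m}`; since
`B_{2m} ≠ 0` this means `ω_m(n) = ((2m)!/(2B_{2m})) ⬝ (coeff_{2m} W_n)/Φ_n(1)`. -/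
noncomputable def omegaAK (n m : ℕ) : ℝ :=
  ((((2 * m).factorial : ℚ) / (2 * _root_.bernoulli (2 * m)) : ℚ) : ℝ) *
    ((W n).coeff (2 * m) / (Polynomial.cyclotomic n ℝ).eval 1)

namespace Polynomial

variable {R : Type*} [CommRing R]

/-- `Y ^ N * P ((Y - 1) ^ 2 / Y)`, i.e. `P (Y + Y⁻¹ - 2)` with denominators cleared. -/
noncomputable def joukowskiHomog (N : ℕ) (P : R[X]) : R[X] :=
  ∑ i ∈ range (N + 1), C (P.coeff i) * ((X - 1) ^ (2 * i) * X ^ (N - i))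

theorem joukowskiHomog_sub (N : ℕ) (P Q : R[X]) :
    joukowskiHomog N (P - Q) = joukowskiHomog N P - joukowskiHomog N Q := by
  simp only [joukowskiHomog, coeff_sub, C_sub, sub_mul, sum_sub_distrib]

theorem joukowskiHomog_X_pow (N : ℕ) : joukowskiHomog N (X ^ N : R[X]) = (X - 1) ^ (2 * N) := by
  rw [joukowskiHomog, sum_eq_single_of_mem N (self_mem_range_succ N)]
  · simp
  · intro i _ hi
    simp [coeff_X_pow, hi]

theorem coeff_joukowskiHomog_sub {N i : ℕ} (hi : i ≤ N) (P : R[X]) :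
    (joukowskiHomog N P).coeff (N - i) =
      P.coeff i +
        ∑ j ∈ Ioc i N, P.coeff j * ((X - 1 : R[X]) ^ (2 * j) * X ^ (N - j)).coeff (N - i) := by
  have hlow : ∀ j : ℕ, j < i → ((X - 1 : R[X]) ^ (2 * j) * X ^ (N - j)).coeff (N - i) = 0 :=
    fun j hj => by rw [coeff_mul_X_pow', if_neg (by omega)]
  have hdiag : ((X - 1 : R[X]) ^ (2 * i) * X ^ (N - i)).coeff (N - i) = 1 := by
    simp [coeff_mul_X_pow', coeff_zero_eq_eval_zero]
  rw [joukowskiHomog, finsetSum_coeff, ← sum_subset (s₁ := Icc i N)]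
  · rw [← Ioc_insert_left hi, sum_insert left_notMem_Ioc]
    simp only [coeff_C_mul, hdiag, mul_one]
  · intro j hj
    simp only [mem_Icc, mem_range] at hj ⊢
    omega
  · intro j hjN hj
    simp only [mem_range, mem_Icc, not_and, not_le] at hjN hj
    rw [coeff_C_mul, hlow j (by omega), mul_zero]

theorem natDegree_prod_X_add_C {ι : Type*} [Nontrivial R] (s : Finset ι) (a : ι → R) :
    (∏ k ∈ s, (X + C (a k))).natDegree = #s := by
  rw [natDegree_prod_of_monic _ _ fun k _ => monic_X_add_C (a k)]
  simp

theorem coeff_mem_of_coeff_joukowskiHomog_mem (M : AddSubgroup R) {N : ℕ} {P : R[X]}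
    (hP : P.natDegree ≤ N) (h : ∀ k, (joukowskiHomog N P).coeff k ∈ M) (i : ℕ) :
    P.coeff i ∈ M := by
  rcases lt_or_ge N i with hNi | hiN
  · rw [coeff_eq_zero_of_natDegree_lt (hP.trans_lt hNi)]
    exact M.zero_mem
  induction hk : N - i using Nat.strong_induction_on generalizing i with
  | _ k ih =>
  have hcoeff := coeff_joukowskiHomog_sub hiN P
  rw [eq_sub_of_add_eq hcoeff.symm]
  refine M.sub_mem (h _) (M.sum_mem fun j hj => ?_)
  simp only [mem_Ioc] at hj
  have hint : ((X - 1 : R[X]) ^ (2 * j) * X ^ (N - j)).coeff (N - i) =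
      (((X - 1 : ℤ[X]) ^ (2 * j) * X ^ (N - j)).coeff (N - i) : R) := by
    rw [← eq_intCast (Int.castRingHom R), ← coeff_map]
    simp
  rw [hint, mul_comm, ← zsmul_eq_mul]
  exact M.zsmul_mem (ih (N - j) (by omega) j hj.2 rfl) _

theorem eval_joukowskiHomog {K : Type*} [Field K] {N : ℕ} {P : K[X]} (hP : P.natDegree ≤ N)
    {z : K} (hz : z ≠ 0) : (joukowskiHomog N P).eval z = z ^ N * P.eval ((z - 1) ^ 2 / z) := by
  rw [eval_eq_sum_range' (Nat.lt_succ_of_le hP), mul_sum, joukowskiHomog, eval_finsetSum]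
  refine sum_congr rfl fun i hi => ?_
  rw [mem_range] at hi
  rw [← pow_sub_mul_pow z (Nat.le_of_lt_succ hi)]
  simp only [eval_mul, eval_C, eval_pow, eval_sub, eval_X, eval_one, div_pow, ← pow_mul]
  field_simp

theorem joukowskiHomog_prod_X_add_C {K ι : Type*} [Field K] [Infinite K] (s : Finset ι)
    (a : ι → K) :
    joukowskiHomog #s (∏ k ∈ s, (X + C (a k))) = ∏ k ∈ s, ((X - 1) ^ 2 + C (a k) * X) := by
  have hdeg := (natDegree_prod_X_add_C s a).le
  refine eq_of_infinite_eval_eq _ _ (Set.infinite_of_finite_compl (s := {0}ᶜ) (by simp) |>.mono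
    fun z hz => ?_)
  have hz : z ≠ 0 := hz
  simp only [Set.mem_ofPred_eq, eval_joukowskiHomog hdeg hz, eval_prod, ← prod_const,
    ← prod_mul_distrib]
  refine prod_congr rfl fun k _ => ?_
  simp only [eval_add, eval_mul, eval_pow, eval_sub, eval_X, eval_C, eval_one]
  field_simp

theorem cyclotomic_prime_pow_eq_X_sub_one_pow (p k : ℕ) [Fact p.Prime] :
    cyclotomic (p ^ (k + 1)) (ZMod p) = (X - 1) ^ (p ^ (k + 1)).totient := by
  have h := cyclotomic_mul_prime_pow_eq (ZMod p) (m := 1)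
    (Nat.Prime.not_dvd_one Fact.out) k.succ_pos
  rw [mul_one, cyclotomic_one] at h
  rw [h, Nat.totient_prime_pow_succ Fact.out, Nat.mul_sub, pow_succ, mul_one, Nat.succ_sub_one]

theorem eval_one_cyclotomic_dvd_coeff_sub (n i : ℕ) :
    (cyclotomic n ℤ).eval 1 ∣ (cyclotomic n ℤ - (X - 1) ^ n.totient).coeff i := by
  by_cases hpp : IsPrimePow n
  · obtain ⟨p, k, hp, hk, rfl⟩ := hpp
    have : Fact p.Prime := ⟨Nat.prime_iff.mpr hp⟩
    obtain ⟨k, rfl⟩ := Nat.exists_eq_succ_of_ne_zero hk.ne'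
    rw [eval_one_cyclotomic_prime_pow, ← ZMod.intCast_zmod_eq_zero_iff_dvd, ← eq_intCast
      (Int.castRingHom (ZMod p)), ← coeff_map]
    simp [cyclotomic_prime_pow_eq_X_sub_one_pow]
  · rcases eq_or_ne n 1 with rfl | hn1
    · simp
    rw [eval_one_cyclotomic_not_prime_pow fun {p} hp k hk => ?_]
    · exact one_dvd _
    subst hk
    rcases Nat.eq_zero_or_pos k with rfl | hk0
    · exact hn1 (pow_zero p)
    · exact hpp ⟨p, k, hp.prime, hk0, rfl⟩

end Polynomial

def halfTotatives (n : ℕ) : Finset ℕ :=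
  (Ico 1 n).filter (fun k => 2 * k < n ∧ Nat.gcd k n = 1)

theorem filter_coprime_range_eq_union {n : ℕ} (hn : 2 < n) :
    (range n).filter n.Coprime = halfTotatives n ∪ (halfTotatives n).image (n - ·) := by
  have hhalf : ∀ k, n.Coprime k → 2 * k ≠ n := fun k hk h2k => by
    have : k ∣ n := ⟨2, by omega⟩
    have := Nat.Coprime.eq_one_of_dvd hk.symm this
    omega
  ext j
  simp only [halfTotatives, mem_filter, mem_range, mem_union, mem_image, mem_Ico]
  constructor
  · rintro ⟨hjn, hj⟩
    have hj0 : j ≠ 0 := by rintro rfl; simp at hj; omega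
    rcases lt_or_gt_of_ne (hhalf j hj) with h | h
    · exact Or.inl ⟨⟨by omega, hjn⟩, h, Nat.coprime_comm.mp hj⟩
    · refine Or.inr ⟨n - j, ⟨⟨by omega, by omega⟩, by omega, ?_⟩, by omega⟩
      exact (Nat.coprime_self_sub_left hjn.le).mpr (Nat.coprime_comm.mp hj)
  · rintro (⟨⟨_, hjn⟩, _, hj⟩ | ⟨k, ⟨⟨_, _⟩, _, hk⟩, rfl⟩)
    · exact ⟨hjn, Nat.coprime_comm.mp hj⟩
    · exact ⟨by omega, Nat.coprime_comm.mp ((Nat.coprime_self_sub_left (by omega)).mpr hk)⟩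

theorem disjoint_halfTotatives_image (n : ℕ) :
    Disjoint (halfTotatives n) ((halfTotatives n).image (n - ·)) := by
  simp only [disjoint_left, halfTotatives, mem_filter, mem_image, mem_Ico]
  rintro j ⟨_, hj, _⟩ ⟨k, ⟨_, hk, _⟩, rfl⟩
  omega

theorem injOn_sub_halfTotatives (n : ℕ) : Set.InjOn (n - ·) (halfTotatives n) := by
  intro j hj k hk hjk
  simp only [halfTotatives, coe_filter, mem_Ico, Set.mem_ofPred_eq] at hj hk hjk
  omega

theorem two_mul_card_halfTotatives {n : ℕ} (hn : 2 < n) : 2 * #(halfTotatives n) = n.totient := by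
  rw [Nat.totient_eq_card_coprime, filter_coprime_range_eq_union hn,
    card_union_of_disjoint (disjoint_halfTotatives_image n),
    card_image_of_injOn (injOn_sub_halfTotatives n), two_mul]

theorem prod_filter_coprime_range {M : Type*} [CommMonoid M] {n : ℕ} (hn : 2 < n)
    (f : ℕ → M) :
    ∏ j ∈ (range n).filter n.Coprime, f j = ∏ k ∈ halfTotatives n, f k * f (n - k) := by
  rw [filter_coprime_range_eq_union hn, prod_union (disjoint_halfTotatives_image n),
    prod_image (injOn_sub_halfTotatives n), prod_mul_distrib]

theorem IsPrimitiveRoot.cyclotomic_eq_prod_X_sub_C_pow {K : Type*} [CommRing K] [IsDomain K]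
    {ζ : K} {n : ℕ} (h : IsPrimitiveRoot ζ n) :
    cyclotomic n K = ∏ i ∈ (range n).filter n.Coprime, (X - C (ζ ^ i)) := by
  rcases Nat.eq_zero_or_pos n with rfl | hn
  · simp
  have : NeZero n := ⟨hn.ne'⟩
  rw [cyclotomic_eq_prod_X_sub_primitiveRoots h]
  symm
  refine prod_nbij (ζ ^ ·) ?_ ?_ ?_ fun _ _ => rfl
  · intro i hi
    simp only [mem_filter, mem_range] at hi
    exact (mem_primitiveRoots hn).mpr (h.pow_of_coprime i hi.2.symm)
  · intro i hi j hj hij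
    simp only [mem_coe, mem_filter, mem_range] at hi hj
    exact h.pow_inj hi.1 hj.1 hij
  · intro μ hμ
    rw [mem_coe, mem_primitiveRoots hn, h.isPrimitiveRoot_iff] at hμ
    obtain ⟨i, hin, hi, rfl⟩ := hμ
    exact ⟨i, mem_filter.mpr ⟨mem_range.mpr hin, hi.symm⟩, rfl⟩

theorem X_sub_C_exp_pow_mul_X_sub_C_exp_pow {n k : ℕ} (hn : n ≠ 0) (hk : k ≤ n) :
    let ω := Complex.exp (2 * π * Complex.I / n)
    (X - C (ω ^ k)) * (X - C (ω ^ (n - k))) =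
      ((X - 1) ^ 2 + C (4 * Real.sin (π * k / n) ^ 2) * X).map (algebraMap ℝ ℂ) := by
  intro ω
  have hω := Complex.isPrimitiveRoot_exp n hn
  have hprod : ω ^ k * ω ^ (n - k) = 1 := by
    rw [← pow_add, Nat.add_sub_cancel' hk, hω.pow_eq_one]
  have hωk : ω ^ k = Complex.exp ((2 * (π * k / n) : ℝ) * Complex.I) := by
    rw [← Complex.exp_nat_mul]
    push_cast
    ring_nf
  have hsum : ω ^ k + ω ^ (n - k) = 2 - ((4 * Real.sin (π * k / n) ^ 2 : ℝ) : ℂ) := by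
    rw [eq_inv_of_mul_eq_one_right hprod, hωk, ← Complex.exp_neg, ← neg_mul,
      ← Complex.cos_add_sin_I, ← Complex.cos_add_sin_I]
    push_cast
    rw [Complex.cos_neg, Complex.sin_neg, Complex.cos_two_mul, Complex.cos_sq']
    ring
  simp only [Polynomial.map_add, Polynomial.map_pow, Polynomial.map_sub, Polynomial.map_mul,
    Polynomial.map_X, Polynomial.map_one, Polynomial.map_C]
  have hC1 := congrArg C hprod
  have hC2 := congrArg C hsum
  simp only [map_mul, map_add, map_sub, map_one, map_ofNat] at hC1 hC2
  linear_combination hC1 - X * hC2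

theorem cyclotomic_real_eq_prod_halfTotatives {n : ℕ} (hn : 2 < n) :
    cyclotomic n ℝ =
      ∏ k ∈ halfTotatives n, ((X - 1) ^ 2 + C (4 * Real.sin (π * k / n) ^ 2) * X) := by
  apply map_injective (algebraMap ℝ ℂ) (algebraMap ℝ ℂ).injective
  rw [map_cyclotomic, (Complex.isPrimitiveRoot_exp n (by omega)).cyclotomic_eq_prod_X_sub_C_pow,
    prod_filter_coprime_range hn, Polynomial.map_prod]
  refine prod_congr rfl fun k hk => X_sub_C_exp_pow_mul_X_sub_C_exp_pow (by omega) ?_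
  simp only [halfTotatives, mem_filter, mem_Ico] at hk
  omega

noncomputable def Wsq (n : ℕ) : ℝ[X] :=
  ∏ k ∈ halfTotatives n, (X + C (4 * Real.sin (π * k / n) ^ 2))

theorem expand_Wsq (n : ℕ) : expand ℝ 2 (Wsq n) = W n := by
  simp [Wsq, W, halfTotatives]

theorem cyclotomic_real_eq_joukowskiHomog_Wsq {n : ℕ} (hn : 2 < n) :
    cyclotomic n ℝ = joukowskiHomog #(halfTotatives n) (Wsq n) := by
  rw [cyclotomic_real_eq_prod_halfTotatives hn, Wsq, joukowskiHomog_prod_X_add_C]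

theorem coeff_Wsq_mem_zmultiples {n m : ℕ} (hn : 2 < n) (hm : 2 * m < n.totient) :
    (Wsq n).coeff m ∈ AddSubgroup.zmultiples ((cyclotomic n ℝ).eval 1) := by
  set d := #(halfTotatives n)
  have hd : 2 * d = n.totient := two_mul_card_halfTotatives hn
  have hdeg : (Wsq n - X ^ d).natDegree ≤ d :=
    (natDegree_sub_le _ _).trans (max_le (natDegree_prod_X_add_C _ _).le (natDegree_X_pow_le d))
  have hhom : joukowskiHomog d (Wsq n - X ^ d) =
      (cyclotomic n ℤ - (X - 1) ^ n.totient).map (Int.castRingHom ℝ) := by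
    rw [joukowskiHomog_sub, joukowskiHomog_X_pow, ← cyclotomic_real_eq_joukowskiHomog_Wsq hn, hd]
    simp
  have hmem := coeff_mem_of_coeff_joukowskiHomog_mem
    (AddSubgroup.zmultiples ((cyclotomic n ℝ).eval 1)) hdeg (fun k => ?_) m
  · simpa [coeff_X_pow, show m ≠ d by omega] using hmem
  · obtain ⟨z, hz⟩ := eval_one_cyclotomic_dvd_coeff_sub n k
    refine ⟨z, ?_⟩
    rw [hhom, coeff_map, hz, ← map_cyclotomic_int, eval_one_map]
    simp [mul_comm]

theorem bernoulli_two_mul_ne_zero {m : ℕ} (hm : m ≠ 0) : _root_.bernoulli (2 * m) ≠ 0 := by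
  intro h
  have hζ := riemannZeta_two_mul_nat hm
  rw [h, Rat.cast_zero, mul_zero, zero_div] at hζ
  refine riemannZeta_ne_zero_of_one_lt_re ?_ hζ
  norm_cast
  omega

/-- For `n ≥ 3` and `1 ≤ m < φ(n)/2`, the number `(2B_{2m}/(2m)!) ω_m(n)` is an
integer. -/
theorem two_bernoulli_omega_int (n m : ℕ) (hn : 3 ≤ n) (hm : 1 ≤ m)
    (h : 2 * m < Nat.totient n) :
    ∃ z : ℤ, ((2 * _root_.bernoulli (2 * m) / ((2 * m).factorial : ℚ) : ℚ) : ℝ) * omegaAK n m = z := by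
  obtain ⟨z, hz⟩ := AddSubgroup.mem_zmultiples_iff.mp (coeff_Wsq_mem_zmultiples hn h)
  have hB : _root_.bernoulli (2 * m) ≠ 0 := bernoulli_two_mul_ne_zero (by omega)
  have hΦ : (cyclotomic n ℝ).eval 1 ≠ 0 := (cyclotomic_pos hn 1).ne'
  refine ⟨z, ?_⟩
  rw [omegaAK, ← expand_Wsq, coeff_expand_mul' two_pos, ← hz, zsmul_eq_mul]
  push_cast
  field_simp
end

section
/- For every integer n ≥ 3 and every integer k ≥ 2 with 2k+1 < φ(n), the integer Φ_n^{(2k+1)}(1)/Φ_n(1) is divisible by φ(n) − 2k; moreover for k = 1 (with 3 < φ(n)), 2Φ_n^{(3)}(1)/Φ_n(1) is divisible by φ(n) − 2. -/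
/-!
Write `A = Φ_n^{(m)}(1) = ∑ cᵢ P(i)` with `m = 2k + 1`, `cᵢ` the coefficients of `Φ_n` and `P` the
descending Pochhammer polynomial. Since `Φ_n` is palindromic of degree `d = φ(n)`, also
`A = ∑ cᵢ P(d - i)`; and since `m` is odd, `P(2k - y) = -P(y)`. With `M = d - 2k` and `yᵢ = 2k - i`
this gives `2A = ∑ cᵢ (P(yᵢ + M) - P(yᵢ)) ≡ M ∑ cᵢ P'(yᵢ) [mod M²]`, so `M ∣ 2A`. For `k ≥ 2` every
value of `P'` is even and `M` is even, which upgrades this to `M ∣ A`.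

It remains to gain the factor `Φ_n(1)`, which is `1` unless `n = p^e`, where it is `p`. Then
`Φ_n ≡ (X - 1)^d` modulo `p`, so `p` divides every Taylor coefficient of `Φ_n` at `1` below degree
`d`, that is `p · m! ∣ A`. The `p`-part of `M` is below `p^e`, so it divides `d = p^(e-1) (p - 1)`
as well as `M`, hence `2k`, hence `m!`; so `A` carries one more factor `p` than `M` does, and `p M`
divides `A` (resp. `2A`).
-/

open Polynomial Finset

namespace Polynomial

variable {R : Type*}

theorem eval_one_iterate_derivative_eq_sum [CommRing R] (f : R[X]) (m : ℕ) :
    (derivative^[m] f).eval 1 =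
      ∑ i ∈ range (f.natDegree + 1), f.coeff i * (descPochhammer R m).eval (i : R) := by
  conv_lhs => rw [f.as_sum_range_C_mul_X_pow]
  simp [iterate_derivative_sum, iterate_derivative_C_mul, iterate_derivative_X_pow_eq_natCast_mul,
    eval_finsetSum, descPochhammer_eval_eq_descFactorial]

theorem eval_iterate_derivative_eq_factorial_mul_coeff_taylor [CommSemiring R] (f : R[X])
    (m : ℕ) (r : R) : (derivative^[m] f).eval r = m.factorial * (taylor r f).coeff m := by
  rw [taylor_coeff, ← factorial_smul_hasseDeriv]
  simp

theorem descPochhammer_eval_reflect [CommRing R] (m : ℕ) (x : R) :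
    (descPochhammer R m).eval (m - 1 - x) = (-1) ^ m * (descPochhammer R m).eval x := by
  rw [descPochhammer_eval_eq_ascPochhammer, ← ascPochhammer_eval_neg_eq_descPochhammer]
  ring_nf

theorem two_dvd_eval_descPochhammer {r : ℕ} (hr : 2 ≤ r) (y : ℤ) :
    2 ∣ (descPochhammer ℤ r).eval y := by
  obtain ⟨r, rfl⟩ := Nat.exists_eq_add_of_le hr
  rw [← descPochhammer_mul, eval_mul]
  refine Dvd.dvd.mul_right ?_ _
  have h2 : (descPochhammer ℤ 2).eval y = y * (y - 1) := by
    simp [descPochhammer_succ_right]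
  rw [h2]
  exact even_iff_two_dvd.mp (Int.even_mul_pred_self y)

theorem two_dvd_eval_derivative_descPochhammer {m : ℕ} (hm : 4 ≤ m) (y : ℤ) :
    2 ∣ (derivative (descPochhammer ℤ m)).eval y := by
  obtain ⟨r, rfl⟩ := Nat.exists_eq_add_of_le (show 2 ≤ m by omega)
  rw [← descPochhammer_mul, derivative_mul, eval_add, eval_mul, eval_mul, eval_comp]
  exact dvd_add ((two_dvd_eval_descPochhammer (by omega) _).mul_left _)
    ((two_dvd_eval_descPochhammer le_rfl y).mul_right _)

theorem reverse_X_pow_sub_one [CommRing R] (n : ℕ) :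
    (X ^ n - 1 : R[X]).reverse = -(X ^ n - 1) := by
  nontriviality R
  rw [sub_eq_add_neg, ← C_1, ← C_neg, reverse_add_C, natDegree_X_pow]
  simp [reverse]

theorem reverse_prod [CommSemiring R] [NoZeroDivisors R] {ι : Type*} (s : Finset ι)
    (f : ι → R[X]) : (∏ i ∈ s, f i).reverse = ∏ i ∈ s, (f i).reverse := by
  classical
  induction s using Finset.induction_on with
  | empty => simpa using reverse_C (1 : R)
  | insert a s ha ih => rw [prod_insert ha, prod_insert ha, reverse_mul_of_domain, ih]

theorem reverse_cyclotomic [CommRing R] [IsDomain R] {n : ℕ} (hn : 2 ≤ n) :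
    (cyclotomic n R).reverse = cyclotomic n R := by
  induction n using Nat.strong_induction_on with
  | _ n ih =>
  have h1 : 1 ∈ n.properDivisors := Nat.one_mem_properDivisors_iff_one_lt.mpr hn
  set T := ∏ i ∈ n.properDivisors.erase 1, cyclotomic i R
  have hT : T.reverse = T := by
    rw [reverse_prod]
    refine prod_congr rfl fun i hi => ?_
    obtain ⟨hi1, hi⟩ := mem_erase.mp hi
    have := Nat.pos_of_mem_properDivisors hi
    exact ih i (Nat.mem_properDivisors.mp hi).2 (by omega)
  have hprod : X ^ n - 1 = cyclotomic n R * ((X ^ 1 - 1) * T) := by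
    rw [← prod_cyclotomic_eq_X_pow_sub_one (by omega), ← Nat.cons_self_properDivisors (by omega),
      prod_cons, ← mul_prod_erase _ _ h1, cyclotomic_one, pow_one]
  have hrev := congrArg reverse hprod
  rw [reverse_mul_of_domain, reverse_mul_of_domain, reverse_X_pow_sub_one, reverse_X_pow_sub_one,
    hT] at hrev
  refine mul_right_cancel₀ (b := (X ^ 1 - 1) * T) ?_ (by linear_combination hrev + hprod)
  exact mul_ne_zero (by simpa using X_sub_C_ne_zero (1 : R))
    (prod_ne_zero_iff.mpr fun i _ => cyclotomic_ne_zero i R)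

theorem sum_coeff_mul_reflect_of_reverse_eq [Semiring R] {f : R[X]} (hf : f.reverse = f)
    (g : ℕ → R) :
    ∑ i ∈ range (f.natDegree + 1), f.coeff i * g (f.natDegree - i) =
      ∑ i ∈ range (f.natDegree + 1), f.coeff i * g i := by
  rw [← sum_range_reflect]
  refine sum_congr rfl fun i hi => ?_
  have hi : i ≤ f.natDegree := Nat.lt_succ_iff.mp (mem_range.mp hi)
  rw [Nat.add_sub_cancel, Nat.sub_sub_self hi]
  conv_rhs => rw [← hf, coeff_reverse, revAt_le hi]

theorem two_mul_eval_one_iterate_derivative_of_reverse_eq [CommRing R] {f : R[X]}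
    (hf : f.reverse = f) (k : ℕ) :
    ∃ V : R, 2 * (derivative^[2 * k + 1] f).eval 1 =
      (f.natDegree - 2 * k : R) * ∑ i ∈ range (f.natDegree + 1),
        f.coeff i * (derivative (descPochhammer R (2 * k + 1))).eval (2 * k - i : R) +
      (f.natDegree - 2 * k : R) ^ 2 * V := by
  set d := f.natDegree
  set P := descPochhammer R (2 * k + 1)
  set M : R := d - 2 * k
  have hA := eval_one_iterate_derivative_eq_sum f (2 * k + 1)
  have hA' : (derivative^[2 * k + 1] f).eval 1 =
      ∑ i ∈ range (d + 1), f.coeff i * P.eval ((2 * k - i : R) + M) := by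
    rw [hA, ← sum_coeff_mul_reflect_of_reverse_eq hf]
    refine sum_congr rfl fun i hi => ?_
    rw [Nat.cast_sub (Nat.lt_succ_iff.mp (mem_range.mp hi))]
    congr 2
    ring
  have hodd (i : ℕ) : P.eval (i : R) = -P.eval (2 * k - i : R) := by
    have h := descPochhammer_eval_reflect (R := R) (2 * k + 1) (2 * k - i)
    rw [Odd.neg_one_pow ⟨k, rfl⟩, neg_one_mul] at h
    push_cast at h
    rw [← h]
    congr 1
    ring
  refine ⟨∑ i ∈ range (d + 1), f.coeff i * (binomExpansion P (2 * k - i : R) M).val, ?_⟩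
  calc 2 * (derivative^[2 * k + 1] f).eval 1
      = ∑ i ∈ range (d + 1), f.coeff i *
          (P.eval ((2 * k - i : R) + M) - P.eval (2 * k - i : R)) := by
        rw [two_mul]
        nth_rw 1 [hA']
        rw [hA, ← sum_add_distrib]
        refine sum_congr rfl fun i _ => ?_
        rw [hodd]
        ring
    _ = ∑ i ∈ range (d + 1), f.coeff i *
          ((derivative P).eval (2 * k - i : R) * M +
            (binomExpansion P (2 * k - i : R) M).val * M ^ 2) := by
        refine sum_congr rfl fun i _ => ?_
        linear_combination f.coeff i * (binomExpansion P (2 * k - i : R) M).2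
    _ = _ := by
        rw [mul_sum, mul_sum, ← sum_add_distrib]
        refine sum_congr rfl fun i _ => ?_
        ring

theorem natDegree_sub_dvd_two_mul_eval_one_iterate_derivative {f : ℤ[X]} (hf : f.reverse = f)
    (k : ℕ) : (f.natDegree - 2 * k : ℤ) ∣ 2 * (derivative^[2 * k + 1] f).eval 1 := by
  obtain ⟨V, hV⟩ := two_mul_eval_one_iterate_derivative_of_reverse_eq hf k
  rw [hV, sq, mul_assoc]
  exact dvd_add (dvd_mul_right _ _) (dvd_mul_right _ _)

theorem natDegree_sub_dvd_eval_one_iterate_derivative {f : ℤ[X]} (hf : f.reverse = f)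
    (hd : Even f.natDegree) {k : ℕ} (hk : 2 ≤ k) :
    (f.natDegree - 2 * k : ℤ) ∣ (derivative^[2 * k + 1] f).eval 1 := by
  obtain ⟨V, hV⟩ := two_mul_eval_one_iterate_derivative_of_reverse_eq hf k
  obtain ⟨W, hW⟩ : 2 ∣ ∑ i ∈ range (f.natDegree + 1),
      f.coeff i * (derivative (descPochhammer ℤ (2 * k + 1))).eval (2 * k - i : ℤ) :=
    dvd_sum fun i _ => (two_dvd_eval_derivative_descPochhammer (by omega) _).mul_left _
  obtain ⟨N, hN⟩ : (2 : ℤ) ∣ f.natDegree - 2 * k :=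
    dvd_sub (by exact_mod_cast hd.two_dvd) (dvd_mul_right _ _)
  refine ⟨W + N * V, mul_left_cancel₀ two_ne_zero ?_⟩
  rw [hV, hW]
  linear_combination ((f.natDegree - 2 * k : ℤ) * V) * hN

theorem map_cyclotomic_prime_pow {p e : ℕ} [hp : Fact p.Prime] (he : 0 < e) :
    (cyclotomic (p ^ e) ℤ).map (Int.castRingHom (ZMod p)) = (X - 1) ^ (p ^ e).totient := by
  have h := cyclotomic_mul_prime_pow_eq (ZMod p) (m := 1) hp.out.not_dvd_one he
  rw [mul_one, cyclotomic_one] at h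
  rw [map_cyclotomic_int, h, Nat.totient_prime_pow hp.out he, Nat.mul_sub_one, ← pow_succ,
    Nat.sub_add_cancel he]

theorem prime_dvd_coeff_taylor_one {p d m : ℕ} {f : ℤ[X]}
    (hf : f.map (Int.castRingHom (ZMod p)) = (X - 1) ^ d) (hm : m ≠ d) :
    (p : ℤ) ∣ (taylor 1 f).coeff m := by
  rw [← ZMod.intCast_zmod_eq_zero_iff_dvd, ← eq_intCast (Int.castRingHom (ZMod p)), ← coeff_map,
    map_taylor, hf, taylor_pow, map_sub, taylor_X, taylor_one]
  simp [coeff_X_pow, hm]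

end Polynomial

theorem Nat.ordProj_totient_prime_pow_sub_dvd {p e j : ℕ} (hp : p.Prime) (hj : 0 < j)
    (hjφ : j < (p ^ e).totient) : ordProj[p] ((p ^ e).totient - j) ∣ j := by
  set M := (p ^ e).totient - j
  have he : 0 < e := Nat.pos_of_ne_zero fun he => by simp [he] at hjφ; omega
  have hMe : ordProj[p] M < p ^ e :=
    (Nat.le_of_dvd (by omega) (Nat.ordProj_dvd M p)).trans_lt
      ((Nat.sub_le _ _).trans_lt (Nat.totient_lt _ (Nat.one_lt_pow he.ne' hp.one_lt)))
  have hMφ : ordProj[p] M ∣ (p ^ e).totient := by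
    have := (Nat.pow_lt_pow_iff_right hp.one_lt).mp hMe
    rw [Nat.totient_prime_pow hp he]
    exact (Nat.pow_dvd_pow p (by omega)).mul_right _
  have := Nat.dvd_sub hMφ (Nat.ordProj_dvd M p)
  rwa [Nat.sub_sub_self hjφ.le] at this

theorem Int.prime_mul_dvd_of_dvd_of_pow_succ_dvd {p M : ℕ} (hp : p.Prime) (hM : M ≠ 0) {x : ℤ}
    (hMx : (M : ℤ) ∣ x) (hpx : (p : ℤ) ^ (M.factorization p + 1) ∣ x) : (p * M : ℤ) ∣ x := by
  have hcop : IsCoprime ((p : ℤ) ^ (M.factorization p + 1)) (ordCompl[p] M : ℕ) := by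
    exact_mod_cast Nat.isCoprime_iff_coprime.mpr ((Nat.coprime_ordCompl hp hM).pow_left _)
  have hpM : (p * M : ℤ) = p ^ (M.factorization p + 1) * (ordCompl[p] M : ℕ) := by
    conv_lhs => rw [← Nat.ordProj_mul_ordCompl_eq_self M p]
    push_cast
    ring
  rw [hpM]
  exact hcop.mul_dvd hpx ((Int.natCast_dvd_natCast.mpr (Nat.ordCompl_dvd M p)).trans hMx)

namespace Polynomial

theorem eval_one_cyclotomic_mul_totient_sub_dvd {n k : ℕ} (hk : 0 < k)
    (hkn : 2 * k + 1 < n.totient) {x : ℤ}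
    (hA : (derivative^[2 * k + 1] (cyclotomic n ℤ)).eval 1 ∣ x)
    (hM : (n.totient - 2 * k : ℤ) ∣ x) :
    (cyclotomic n ℤ).eval 1 * (n.totient - 2 * k : ℤ) ∣ x := by
  by_cases hn : IsPrimePow n
  · obtain ⟨p, e, hp, he, rfl⟩ := hn
    have hp := Nat.prime_iff.mpr hp
    have := Fact.mk hp
    obtain ⟨e, rfl⟩ : ∃ e', e = e' + 1 := ⟨e - 1, by omega⟩
    rw [eval_one_cyclotomic_prime_pow]
    set M := (p ^ (e + 1)).totient - 2 * k
    have hMcast : (M : ℤ) = (p ^ (e + 1)).totient - 2 * k := by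
      rw [Nat.cast_sub (by omega)]
      push_cast
      rfl
    have hpA : (p : ℤ) * (2 * k + 1).factorial ∣
        (derivative^[2 * k + 1] (cyclotomic (p ^ (e + 1)) ℤ)).eval 1 := by
      rw [eval_iterate_derivative_eq_factorial_mul_coeff_taylor, mul_comm]
      exact mul_dvd_mul_left _
        (prime_dvd_coeff_taylor_one (map_cyclotomic_prime_pow e.succ_pos) (by omega))
    have hpow : (p : ℤ) ^ (M.factorization p + 1) ∣ x := by
      rw [pow_succ']
      refine (mul_dvd_mul_left _ ?_).trans (hpA.trans hA)
      exact_mod_cast (Nat.ordProj_totient_prime_pow_sub_dvd hp (by omega) (by omega)).trans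
        (Nat.dvd_factorial (by omega) (Nat.le_succ _))
    rw [← hMcast]
    exact Int.prime_mul_dvd_of_dvd_of_pow_succ_dvd hp (by omega) (hMcast ▸ hM) hpow
  · rw [eval_one_cyclotomic_not_prime_pow, one_mul]
    · exact hM
    · rintro p hp (_ | e) rfl
      · simp at hkn
      · exact hn ⟨p, e + 1, hp.prime, e.succ_pos, rfl⟩

end Polynomial

/-- Akiyama–Kaneko congruences: for `n ≥ 3` and `k ≥ 2` with `2k+1 < φ(n)`, the
integer `Φ_n^{(2k+1)}(1)/Φ_n(1)` is divisible by `φ(n) − 2k`; and for `k = 1`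
(with `3 < φ(n)`), `2Φ_n^{(3)}(1)/Φ_n(1)` is divisible by `φ(n) − 2`. -/
theorem akiyama_kaneko_congruences (n : ℕ) (hn : 3 ≤ n) :
    (∀ k : ℕ, 2 ≤ k → 2 * k + 1 < Nat.totient n →
      ∃ z : ℤ, (Polynomial.derivative^[2 * k + 1] (cyclotomic n ℤ)).eval 1 =
        (cyclotomic n ℤ).eval 1 * (((Nat.totient n : ℤ) - 2 * k) * z)) ∧
    (3 < Nat.totient n →
      ∃ z : ℤ, 2 * (Polynomial.derivative^[3] (cyclotomic n ℤ)).eval 1 =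
        (cyclotomic n ℤ).eval 1 * (((Nat.totient n : ℤ) - 2) * z)) := by
  have hrev := reverse_cyclotomic (R := ℤ) (show 2 ≤ n by omega)
  have hdeg := natDegree_cyclotomic n ℤ
  refine ⟨fun k hk hkn => ?_, fun hn3 => ?_⟩
  · have hM := natDegree_sub_dvd_eval_one_iterate_derivative hrev
      (hdeg ▸ Nat.totient_even (by omega)) hk
    rw [hdeg] at hM
    obtain ⟨z, hz⟩ := eval_one_cyclotomic_mul_totient_sub_dvd (by omega) hkn dvd_rfl hM
    exact ⟨z, by rw [hz, mul_assoc]⟩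
  · have hM := natDegree_sub_dvd_two_mul_eval_one_iterate_derivative hrev 1
    rw [hdeg] at hM
    obtain ⟨z, hz⟩ :=
      eval_one_cyclotomic_mul_totient_sub_dvd Nat.one_pos hn3 (dvd_mul_left _ 2) hM
    exact ⟨z, by simpa [mul_assoc] using hz⟩
end
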